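/- arXiv:2403.04139 — 11 statements merged into one kernel-verified Lean document; each statement's English description precedes it below -/
import Mathlib

section
/- If n ≥ 2k and 𝒜 is a family of k-element subsets of {1,...,n} such that every two members of 𝒜 have nonempty intersection, then |𝒜| ≤ C(n-1, k-1). -/
theorem erdos_ko_rado (n k : ℕ) (hn : 2 * k ≤ n)
    (𝒜 : Finset (Finset (Fin n)))
    (huniform : ∀ A ∈ 𝒜, A.card = k)
    (hintersecting : ∀ A ∈ 𝒜, ∀ B ∈ 𝒜, A ≠ B → (A ∩ B).Nonempty) :
    𝒜.card ≤ (n - 1).choose (k - 1) := by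
  rcases Nat.eq_zero_or_pos k with hk | hk
  · subst hk
    have : 𝒜 ⊆ {∅} := by
      intro A hA
      simp [Finset.card_eq_zero.1 (huniform A hA)]
    calc 𝒜.card ≤ 1 := by simpa using Finset.card_le_card this
      _ ≤ _ := Nat.one_le_iff_ne_zero.2 (by simp [Nat.choose_eq_zero_iff])
  · apply Finset.erdos_ko_rado (r := k)
    · intro A hA B hB hd
      rcases eq_or_ne A B with rfl | hne
      · have := huniform A hA
        have : A.Nonempty := Finset.card_pos.1 (by omega)
        exact absurd ((Finset.disjoint_self_iff_empty A).1 hd) this.ne_empty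
      · obtain ⟨x, hx⟩ := hintersecting A hA B hB hne
        exact Finset.not_disjoint_iff.2 ⟨x, Finset.mem_inter.1 hx⟩ hd
    · exact huniform
    · omega
end

section
/- Let ℒ be a set of s nonnegative integers. If 𝒜 is an ℒ-intersecting family of subsets of {1,...,n}, then |𝒜| ≤ C(n,s) + C(n,s-1) + ... + C(n,0). -/
open Finset

namespace FranklWilsonAux

variable {n : ℕ}

/-- Indicator monomial: `m I B = 1` if `I ⊆ B`, else `0`. -/
noncomputable def m (I : Finset (Fin n)) : Finset (Fin n) → ℝ :=
  fun B => if I ⊆ B then 1 else 0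

/-- Span of monomials of degree at most `k`. -/
noncomputable def W (n k : ℕ) : Submodule ℝ (Finset (Fin n) → ℝ) :=
  Submodule.span ℝ (m '' {I : Finset (Fin n) | I.card ≤ k})

lemma W_mono {k k' : ℕ} (h : k ≤ k') : W n k ≤ W n k' :=
  Submodule.span_mono (Set.image_mono fun _ hI => le_trans hI h)

lemma m_mem {I : Finset (Fin n)} {k : ℕ} (h : I.card ≤ k) : m I ∈ W n k :=
  Submodule.subset_span ⟨I, h, rfl⟩

/-- Multiplication by a fixed function, as a linear map. -/
noncomputable def mulBy (c : Finset (Fin n) → ℝ) :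
    (Finset (Fin n) → ℝ) →ₗ[ℝ] (Finset (Fin n) → ℝ) where
  toFun g := fun B => g B * c B
  map_add' g h := by funext B; simp [add_mul]
  map_smul' r g := by funext B; simp [mul_assoc]

lemma card_inter_eq_sum (A B : Finset (Fin n)) :
    ((A ∩ B).card : ℝ) = ∑ i ∈ A, (if i ∈ B then (1 : ℝ) else 0) := by
  rw [Finset.sum_ite, Finset.sum_const, Finset.sum_const]
  simp [Finset.filter_mem_eq_inter]

lemma map_mulBy_le (A : Finset (Fin n)) (l : ℕ) (k : ℕ) :
    (W n k).map (mulBy fun B => ((A ∩ B).card : ℝ) - l) ≤ W n (k + 1) := by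
  rw [W, Submodule.map_span, Submodule.span_le]
  rintro _ ⟨_, ⟨I, hI, rfl⟩, rfl⟩
  have key : (mulBy fun B => ((A ∩ B).card : ℝ) - l) (m I)
      = (∑ i ∈ A, m (insert i I)) - (l : ℝ) • m I := by
    funext B
    have h1 : ∀ i, m I B * (if i ∈ B then (1:ℝ) else 0) = m (insert i I) B := by
      intro i
      by_cases hIB : I ⊆ B <;> by_cases hiB : i ∈ B <;>
        simp [m, hIB, hiB, Finset.insert_subset_iff]
    simp only [mulBy, LinearMap.coe_mk, AddHom.coe_mk, card_inter_eq_sum,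
      Pi.sub_apply, Pi.smul_apply, Finset.sum_apply, smul_eq_mul]
    rw [mul_sub, Finset.mul_sum]
    congr 1
    · exact Finset.sum_congr rfl fun i _ => h1 i
    · ring
  rw [SetLike.mem_coe, key]
  refine sub_mem (Submodule.sum_mem _ fun i _ => ?_) (Submodule.smul_mem _ _ ?_)
  · exact m_mem ((Finset.card_insert_le _ _).trans (Nat.add_le_add_right hI 1))
  · exact m_mem (hI.trans (Nat.le_succ k))

lemma prod_mem (A : Finset (Fin n)) (T : Finset ℕ) :
    (fun B => ∏ l ∈ T, (((A ∩ B).card : ℝ) - l)) ∈ W n T.card := by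
  induction T using Finset.induction_on with
  | empty =>
    have : (fun _ : Finset (Fin n) => (1 : ℝ)) = m (∅ : Finset (Fin n)) := by
      funext B; simp [m]
    simpa [this] using m_mem (le_refl 0)
  | @insert a T ha ih =>
    have : (fun B => ∏ l ∈ insert a T, (((A ∩ B).card : ℝ) - l))
        = (mulBy fun B => ((A ∩ B).card : ℝ) - a)
            (fun B => ∏ l ∈ T, (((A ∩ B).card : ℝ) - l)) := by
      funext B
      simp [mulBy, Finset.prod_insert ha, mul_comm]
    rw [this, Finset.card_insert_of_notMem ha]
    exact map_mulBy_le A a T.card ⟨_, ih, rfl⟩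

end FranklWilsonAux

theorem frankl_wilson (n s : ℕ) (L : Finset ℕ) (hL : L.card = s)
    (𝒜 : Finset (Finset (Fin n)))
    (hintersecting : ∀ A ∈ 𝒜, ∀ B ∈ 𝒜, A ≠ B → (A ∩ B).card ∈ L) :
    𝒜.card ≤ ∑ i ∈ Finset.range (s + 1), n.choose i := by
  classical
  open FranklWilsonAux in
  -- the polynomial functions
  set f : Finset (Fin n) → (Finset (Fin n) → ℝ) :=
    fun A B => ∏ l ∈ L.filter (· < A.card), (((A ∩ B).card : ℝ) - l) with hf
  -- diagonal nonvanishing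
  have hdiag : ∀ A : Finset (Fin n), f A A ≠ 0 := by
    intro A
    have : f A A = ∏ l ∈ L.filter (· < A.card), ((A.card : ℝ) - l) := by
      simp [hf]
    rw [this]
    refine Finset.prod_ne_zero_iff.2 fun l hl => ?_
    have hlt : l < A.card := (Finset.mem_filter.1 hl).2
    have : (l : ℝ) < (A.card : ℝ) := by exact_mod_cast hlt
    linarith
  -- off-diagonal vanishing
  have hzero : ∀ A ∈ 𝒜, ∀ B ∈ 𝒜, A ≠ B → ¬ A ⊆ B → f A B = 0 := by
    intro A hA B hB hne hnsub
    have hmemL : (A ∩ B).card ∈ L := hintersecting A hA B hB hne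
    have hlt : (A ∩ B).card < A.card := by
      refine Finset.card_lt_card ?_
      exact ⟨Finset.inter_subset_left, fun h => hnsub (fun x hx => (Finset.mem_inter.1 (h hx)).2)⟩
    refine Finset.prod_eq_zero (Finset.mem_filter.2 ⟨hmemL, hlt⟩) ?_
    simp
  -- membership in W n s
  have hmemW : ∀ A : Finset (Fin n), f A ∈ W n s := by
    intro A
    have h1 : f A ∈ W n (L.filter (· < A.card)).card := prod_mem A _
    exact W_mono (le_trans (Finset.card_filter_le _ _) (le_of_eq hL)) h1
  -- linear independence of the family indexed by 𝒜
  have hli : LinearIndependent ℝ (fun A : ↥𝒜 => f (A : Finset (Fin n))) := by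
    rw [linearIndependent_iff']
    intro t g hsum
    by_contra hcon
    push_neg at hcon
    obtain ⟨i₁, hi₁t, hi₁⟩ := hcon
    have hne : (t.filter fun i => g i ≠ 0).Nonempty :=
      ⟨i₁, Finset.mem_filter.2 ⟨hi₁t, hi₁⟩⟩
    obtain ⟨i₀, hi₀, hmin⟩ := Finset.exists_min_image _
      (fun i : ↥𝒜 => (i : Finset (Fin n)).card) hne
    have hi₀t : i₀ ∈ t := (Finset.mem_filter.1 hi₀).1
    have hgi₀ : g i₀ ≠ 0 := (Finset.mem_filter.1 hi₀).2
    have hval : ∑ i ∈ t, g i * f (i : Finset (Fin n)) (i₀ : Finset (Fin n)) = 0 := by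
      have := congrFun hsum (i₀ : Finset (Fin n))
      simpa using this
    have hsingle : ∑ i ∈ t, g i * f (i : Finset (Fin n)) (i₀ : Finset (Fin n))
        = g i₀ * f (i₀ : Finset (Fin n)) (i₀ : Finset (Fin n)) := by
      refine Finset.sum_eq_single_of_mem i₀ hi₀t fun b hb hbne => ?_
      by_cases hgb : g b = 0
      · simp [hgb]
      have hbmem : b ∈ t.filter fun i => g i ≠ 0 := Finset.mem_filter.2 ⟨hb, hgb⟩
      have hcardle : (i₀ : Finset (Fin n)).card ≤ (b : Finset (Fin n)).card :=
        hmin b hbmem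
      have hAB : (b : Finset (Fin n)) ≠ (i₀ : Finset (Fin n)) := by
        intro h; exact hbne (Subtype.ext h)
      have hnsub : ¬ (b : Finset (Fin n)) ⊆ (i₀ : Finset (Fin n)) := by
        intro hsub
        exact hAB (Finset.eq_of_subset_of_card_le hsub hcardle)
      rw [hzero _ b.2 _ i₀.2 hAB hnsub, mul_zero]
    rw [hsingle] at hval
    exact hgi₀ ((mul_eq_zero.1 hval).resolve_right (hdiag _))
  -- restrict to the submodule W n s
  set W' := W n s with hW'
  have hli' : LinearIndependent ℝ (fun A : ↥𝒜 =>
      (⟨f (A : Finset (Fin n)), hmemW _⟩ : W')) := by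
    have := hli
    rw [show (fun A : ↥𝒜 => f (A : Finset (Fin n)))
        = W'.subtype ∘ (fun A : ↥𝒜 => (⟨f (A : Finset (Fin n)), hmemW _⟩ : W')) from rfl]
      at this
    exact LinearIndependent.of_comp _ this
  -- finite dimensionality and dimension bound
  have hfin : (FranklWilsonAux.m '' {I : Finset (Fin n) | I.card ≤ s}).Finite :=
    Set.Finite.image _ (Set.toFinite _)
  haveI : FiniteDimensional ℝ W' := FiniteDimensional.span_of_finite ℝ hfin
  have hcard1 : 𝒜.card ≤ Module.finrank ℝ W' := by
    rw [← Fintype.card_coe]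
    exact hli'.fintype_card_le_finrank
  -- bound the dimension by the number of monomials
  have hcard2 : Module.finrank ℝ W' ≤ ∑ i ∈ Finset.range (s + 1), n.choose i := by
    haveI := hfin.fintype
    have h1 : Module.finrank ℝ W' ≤ hfin.toFinset.card := by
      rw [hW', W]
      have := finrank_span_le_card (R := ℝ)
        (FranklWilsonAux.m '' {I : Finset (Fin n) | I.card ≤ s})
      convert this using 2 <;> simp [Set.Finite.toFinset]
    refine h1.trans ?_
    have h2 : hfin.toFinset ⊆ (Finset.univ.filter
        (fun I : Finset (Fin n) => I.card ≤ s)).image FranklWilsonAux.m := by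
      intro x hx
      rw [Set.Finite.mem_toFinset] at hx
      obtain ⟨I, hI, rfl⟩ := hx
      exact Finset.mem_image.2 ⟨I, Finset.mem_filter.2 ⟨Finset.mem_univ _, hI⟩, rfl⟩
    refine (Finset.card_le_card h2).trans ?_
    refine (Finset.card_image_le).trans ?_
    -- count subsets of size ≤ s
    have h3 : (Finset.univ.filter (fun I : Finset (Fin n) => I.card ≤ s))
        = (Finset.range (s+1)).biUnion
            (fun i => Finset.univ.powersetCard i) := by
      ext I
      simp [Finset.mem_powersetCard, Nat.lt_succ_iff]
    rw [h3, Finset.card_biUnion]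
    · refine Finset.sum_le_sum fun i _ => ?_
      rw [Finset.card_powersetCard]
      simp
    · intro i hi j hj hij
      simp only [Finset.disjoint_left, Finset.mem_powersetCard]
      rintro I ⟨-, hIi⟩ ⟨-, hIj⟩
      exact hij (hIi ▸ hIj ▸ rfl)
  exact hcard1.trans hcard2
end

section
/- Let ℒ be a set of s nonnegative integers and K = {k_1,...,k_r} a set of integers with k_i > s - r for each i. If 𝒜 is an ℒ-intersecting family of subsets of {1,...,n} with |A| ∈ K for every A ∈ 𝒜, then |𝒜| ≤ C(n,s) + C(n,s-1) + ... + C(n,s-r+1). -/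
/-!
Polynomial method. For `A ∈ 𝒜` put `f_A(B) = ∏_{l ∈ L, l < |A|} (|A ∩ B| - l)`, and for
`|J| ≤ s - r` put `g_J(B) = [J ⊆ B] ∏_{k ∈ K} (|B| - k)`. As functions of `B` these are
multilinear polynomials of degree at most `s` in the coordinates `[a ∈ B]`. Every `g_J` vanishes
on `𝒜` (sizes lie in `K`), `f_A(B) = 0` for `B ∈ 𝒜` with `|B| ≤ |A|`, `B ≠ A`, and `g_J(J') = 0`
for `|J'| ≤ |J|`, `J' ≠ J`; the diagonal values are nonzero because `k > s - r ≥ |J|`. So the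
evaluation matrix is triangular and the functions are linearly independent, whence
`|𝒜| + #{J : |J| ≤ s - r} ≤ #{I : |I| ≤ s}`, which is the bound.
-/

open Finset Submodule Module

namespace AlonBabaiSuzuki

theorem linearIndependent_of_triangular {R ι X β : Type*} [Ring R] [NoZeroDivisors R]
    [LinearOrder β] {v : ι → X → R} (p : ι → X) (w : ι → β) (hdiag : ∀ i, v i (p i) ≠ 0)
    (hzero : ∀ i j, i ≠ j → w i ≤ w j → v j (p i) = 0) : LinearIndependent R v := by
  classical
  refine linearIndependent_iff'.mpr fun t c hc => ?_
  by_contra! hne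
  obtain ⟨i, hi, hmin⟩ :=
    (t.filter (c · ≠ 0)).exists_min_image w (by simpa [Finset.Nonempty] using hne)
  rw [mem_filter] at hi
  have hsingle : ∑ j ∈ t, c j * v j (p i) = c i * v i (p i) :=
    sum_eq_single_of_mem i hi.1 fun j hj hji => by
      by_cases hcj : c j = 0
      · rw [hcj, zero_mul]
      · rw [hzero i j hji.symm (hmin j (mem_filter.mpr ⟨hj, hcj⟩)), mul_zero]
  have heval : ∑ j ∈ t, c j * v j (p i) = 0 := by simpa using congrFun hc (p i)
  exact mul_ne_zero hi.2 (hdiag i) (hsingle ▸ heval)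

variable {𝕜 α : Type*} [Field 𝕜]

section Polynomial

variable [DecidableEq α]

def subsetIndicator (I : Finset α) : Finset α → 𝕜 := fun B => if I ⊆ B then 1 else 0

variable (𝕜 α) in
/-- Functions on `Finset α` given by multilinear polynomials of degree at most `d` in the
coordinates `B ↦ [a ∈ B]`; the monomial `∏_{a ∈ I} [a ∈ B]` is `subsetIndicator I`. -/
def degreeLE (d : ℕ) : Submodule 𝕜 (Finset α → 𝕜) :=
  span 𝕜 (subsetIndicator '' {I : Finset α | I.card ≤ d})

theorem subsetIndicator_mem_degreeLE {I : Finset α} {d : ℕ} (h : I.card ≤ d) :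
    subsetIndicator I ∈ degreeLE 𝕜 α d :=
  subset_span ⟨I, h, rfl⟩

theorem degreeLE_mono {d e : ℕ} (h : d ≤ e) : degreeLE 𝕜 α d ≤ degreeLE 𝕜 α e :=
  span_mono (Set.image_mono fun _ hI => le_trans hI h)

theorem subsetIndicator_empty : (subsetIndicator ∅ : Finset α → 𝕜) = 1 := by
  ext B
  simp [subsetIndicator]

theorem subsetIndicator_mul_subsetIndicator (I J : Finset α) :
    (subsetIndicator I * subsetIndicator J : Finset α → 𝕜) = subsetIndicator (I ∪ J) := by
  ext B
  by_cases hI : I ⊆ B <;> by_cases hJ : J ⊆ B <;> simp [subsetIndicator, union_subset_iff, hI, hJ]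

theorem mul_mem_degreeLE {f g : Finset α → 𝕜} {d e : ℕ} (hf : f ∈ degreeLE 𝕜 α d)
    (hg : g ∈ degreeLE 𝕜 α e) : f * g ∈ degreeLE 𝕜 α (d + e) := by
  refine (?_ : degreeLE 𝕜 α d * degreeLE 𝕜 α e ≤ _) (mul_mem_mul hf hg)
  rw [degreeLE, degreeLE, span_mul_span, span_le]
  rintro _ ⟨_, ⟨I, hI, rfl⟩, _, ⟨J, hJ, rfl⟩, rfl⟩
  change subsetIndicator I * subsetIndicator J ∈ _
  rw [subsetIndicator_mul_subsetIndicator]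
  exact subsetIndicator_mem_degreeLE ((card_union_le I J).trans (add_le_add hI hJ))

theorem prod_mem_degreeLE {ι : Type*} (T : Finset ι) {f : ι → Finset α → 𝕜}
    (hf : ∀ i ∈ T, f i ∈ degreeLE 𝕜 α 1) : ∏ i ∈ T, f i ∈ degreeLE 𝕜 α T.card := by
  classical
  induction T using Finset.induction_on with
  | empty =>
    rw [prod_empty, card_empty, ← subsetIndicator_empty]
    exact subsetIndicator_mem_degreeLE le_rfl
  | insert i T hi ih =>
    rw [prod_insert hi, card_insert_of_notMem hi, add_comm]
    exact mul_mem_degreeLE (hf i (mem_insert_self i T))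
      (ih fun j hj => hf j (mem_insert_of_mem hj))

theorem card_inter_sub_mem_degreeLE_one (A : Finset α) (c : 𝕜) :
    (fun B => ((A ∩ B).card : 𝕜) - c) ∈ degreeLE 𝕜 α 1 := by
  have hsum : (fun B => ((A ∩ B).card : 𝕜) - c)
      = ∑ a ∈ A, subsetIndicator {a} - c • subsetIndicator ∅ := by
    ext B
    simp [subsetIndicator, ← filter_mem_eq_inter]
  rw [hsum]
  exact sub_mem (sum_mem fun a _ => subsetIndicator_mem_degreeLE (card_singleton a).le)
    (smul_mem _ c (subsetIndicator_mem_degreeLE (by simp)))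

theorem finrank_degreeLE_le [Fintype α] (d : ℕ) :
    finrank 𝕜 (degreeLE 𝕜 α d) ≤ #{I : Finset α | I.card ≤ d} := by
  classical
  have hspan : degreeLE 𝕜 α d
      = span 𝕜 ↑(({I : Finset α | I.card ≤ d} : Finset (Finset α)).image
          (subsetIndicator (𝕜 := 𝕜))) := by
    rw [degreeLE]; congr 1; ext; simp
  rw [hspan]
  exact (finrank_span_finset_le_card _).trans card_image_le

def intersectionProduct (L : Finset ℕ) (A : Finset α) : Finset α → 𝕜 :=
  ∏ l ∈ L.filter (· < A.card), fun B => ((A ∩ B).card : 𝕜) - l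

def sizeProduct (K : Finset ℕ) (J : Finset α) : Finset α → 𝕜 :=
  subsetIndicator J * ∏ k ∈ K, fun B => (B.card : 𝕜) - k

theorem intersectionProduct_mem_degreeLE (L : Finset ℕ) (A : Finset α) :
    intersectionProduct L A ∈ degreeLE 𝕜 α L.card :=
  degreeLE_mono (card_filter_le _ _)
    (prod_mem_degreeLE _ fun l _ => card_inter_sub_mem_degreeLE_one A (l : 𝕜))

theorem sizeProduct_mem_degreeLE [Fintype α] (K : Finset ℕ) (J : Finset α) :
    sizeProduct K J ∈ degreeLE 𝕜 α (J.card + K.card) :=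
  mul_mem_degreeLE (subsetIndicator_mem_degreeLE le_rfl) <|
    prod_mem_degreeLE K fun k _ => by simpa using card_inter_sub_mem_degreeLE_one univ (k : 𝕜)

theorem intersectionProduct_self_ne_zero [CharZero 𝕜] (L : Finset ℕ) (A : Finset α) :
    intersectionProduct L A A ≠ (0 : 𝕜) := by
  simp only [intersectionProduct, prod_apply, inter_self, prod_ne_zero_iff, mem_filter]
  exact fun l hl => sub_ne_zero.mpr (Nat.cast_injective.ne hl.2.ne')

theorem intersectionProduct_eq_zero {L : Finset ℕ} {A B : Finset α} (hL : (A ∩ B).card ∈ L)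
    (hlt : (A ∩ B).card < A.card) : intersectionProduct L A B = (0 : 𝕜) := by
  rw [intersectionProduct, prod_apply]
  exact prod_eq_zero (mem_filter.mpr ⟨hL, hlt⟩) (sub_self _)

theorem sizeProduct_self_ne_zero [CharZero 𝕜] {K : Finset ℕ} {J : Finset α}
    (hJ : J.card ∉ K) : sizeProduct K J J ≠ (0 : 𝕜) := by
  simp only [sizeProduct, Pi.mul_apply, subsetIndicator, subset_refl, if_true, one_mul,
    prod_apply, prod_ne_zero_iff]
  exact fun k hk => sub_ne_zero.mpr (Nat.cast_injective.ne fun h => hJ (h ▸ hk))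

theorem sizeProduct_eq_zero_of_card_mem {K : Finset ℕ} (J : Finset α) {B : Finset α}
    (hB : B.card ∈ K) : sizeProduct K J B = (0 : 𝕜) := by
  rw [sizeProduct, Pi.mul_apply, prod_apply]
  exact mul_eq_zero_of_right _ (prod_eq_zero hB (sub_self _))

theorem sizeProduct_eq_zero_of_not_subset (K : Finset ℕ) {J B : Finset α}
    (hJB : ¬J ⊆ B) : sizeProduct K J B = (0 : 𝕜) := by
  simp [sizeProduct, subsetIndicator, hJB]

theorem linearIndependent_intersectionProduct_sizeProduct [CharZero 𝕜]
    {L K : Finset ℕ} {𝒜 : Finset (Finset α)} (hsizes : ∀ A ∈ 𝒜, A.card ∈ K)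
    (hinter : ∀ A ∈ 𝒜, ∀ B ∈ 𝒜, A ≠ B → (A ∩ B).card ∈ L)
    {𝒥 : Finset (Finset α)} (h𝒥 : ∀ J ∈ 𝒥, J.card ∉ K) :
    LinearIndependent 𝕜 (Sum.elim (fun A : 𝒜 => intersectionProduct (𝕜 := 𝕜) L A.1)
      (fun J : 𝒥 => sizeProduct K J.1)) := by
  refine linearIndependent_of_triangular (Sum.elim Subtype.val Subtype.val)
    (fun i => toLex (Sum.map (fun A : 𝒜 => A.1.card) (fun J : 𝒥 => J.1.card) i)) ?_ ?_
  · rintro (A | J)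
    · exact intersectionProduct_self_ne_zero L A.1
    · exact sizeProduct_self_ne_zero (h𝒥 J.1 J.2)
  · rintro (A | J) (B | J') hne hle
    · simp only [Sum.map_inl, Sum.Lex.inl_le_inl_iff] at hle
      have hBA : B.1 ≠ A.1 := fun h => hne (congrArg Sum.inl (Subtype.ext h.symm))
      refine intersectionProduct_eq_zero (hinter B.1 B.2 A.1 A.2 hBA) (card_lt_card ?_)
      exact ssubset_of_subset_of_ne inter_subset_left fun h =>
        hBA (eq_of_subset_of_card_le (inter_eq_left.mp h) hle)
    · exact sizeProduct_eq_zero_of_card_mem _ (hsizes A.1 A.2)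
    · exact absurd hle Sum.Lex.not_inr_le_inl
    · simp only [Sum.map_inr, Sum.Lex.inr_le_inr_iff] at hle
      exact sizeProduct_eq_zero_of_not_subset K fun h =>
        hne (congrArg Sum.inr (Subtype.ext (eq_of_subset_of_card_le h hle).symm))

theorem card_add_card_filter_le_of_intersecting [Fintype α] {s : ℕ} {L K : Finset ℕ}
    {𝒜 : Finset (Finset α)} (hL : L.card ≤ s) (hK : ∀ k ∈ K, s < k + K.card)
    (hsizes : ∀ A ∈ 𝒜, A.card ∈ K) (hinter : ∀ A ∈ 𝒜, ∀ B ∈ 𝒜, A ≠ B → (A ∩ B).card ∈ L) :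
    𝒜.card + #{J : Finset α | J.card + K.card ≤ s} ≤ #{I : Finset α | I.card ≤ s} := by
  set 𝒥 : Finset (Finset α) := {J | J.card + K.card ≤ s}
  have h𝒥 : ∀ J ∈ 𝒥, J.card + K.card ≤ s := fun J hJ => (mem_filter.mp hJ).2
  set v := Sum.elim (fun A : 𝒜 => intersectionProduct (𝕜 := ℚ) L A.1)
    (fun J : 𝒥 => sizeProduct K J.1)
  have hv : LinearIndependent ℚ v := linearIndependent_intersectionProduct_sizeProduct hsizes
    hinter fun J hJ hJK => by have := hK _ hJK; have := h𝒥 J hJ; omega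
  have hmem : ∀ i, v i ∈ degreeLE ℚ α s := by
    rintro (A | J)
    · exact degreeLE_mono hL (intersectionProduct_mem_degreeLE L A.1)
    · exact degreeLE_mono (h𝒥 J.1 J.2) (sizeProduct_mem_degreeLE K J.1)
  calc 𝒜.card + 𝒥.card = Fintype.card (𝒜 ⊕ 𝒥) := by simp
    _ ≤ (Set.range v).finrank ℚ := linearIndependent_iff_card_le_finrank_span.mp hv
    _ ≤ finrank ℚ (degreeLE ℚ α s) :=
      Submodule.finrank_mono (span_le.mpr (Set.range_subset_iff.mpr hmem))
    _ ≤ _ := finrank_degreeLE_le s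

end Polynomial

theorem card_filter_card_add_le_eq_succ_add_choose [Fintype α] (s r : ℕ) :
    #{I : Finset α | I.card + r ≤ s} = #{I : Finset α | I.card + (r + 1) ≤ s}
      + if r ≤ s then (Fintype.card α).choose (s - r) else 0 := by
  rw [← card_filter_add_card_filter_not (s := {I : Finset α | I.card + r ≤ s})
    (fun I => I.card + (r + 1) ≤ s), filter_filter, filter_filter]
  congr 1
  · congr 1; ext; simp only [mem_filter, mem_univ, true_and]; omega
  · split_ifs with hrs
    · rw [← card_univ, ← card_powersetCard]
      congr 1; ext; simp only [mem_filter, mem_univ, true_and, mem_powersetCard_univ]; omega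
    · exact card_eq_zero.mpr (filter_eq_empty_iff.mpr fun I _ => by omega)

theorem card_filter_card_le_eq_add_sum_choose [Fintype α] (s r : ℕ) :
    #{I : Finset α | I.card ≤ s} = #{I : Finset α | I.card + r ≤ s}
      + ∑ i ∈ range r, if i ≤ s then (Fintype.card α).choose (s - i) else 0 := by
  induction r with
  | zero => simp
  | succ r ih => rw [ih, card_filter_card_add_le_eq_succ_add_choose s r, sum_range_succ]; ring

end AlonBabaiSuzuki

open AlonBabaiSuzuki

theorem alon_babai_suzuki (n s r : ℕ) (L K : Finset ℕ)
    (hL : L.card = s) (hK : K.card = r)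
    (hKbig : ∀ k ∈ K, (s : ℤ) - r < (k : ℤ))
    (𝒜 : Finset (Finset (Fin n)))
    (hsizes : ∀ A ∈ 𝒜, A.card ∈ K)
    (hintersecting : ∀ A ∈ 𝒜, ∀ B ∈ 𝒜, A ≠ B → (A ∩ B).card ∈ L) :
    𝒜.card ≤ ∑ i ∈ Finset.range r, if i ≤ s then n.choose (s - i) else 0 := by
  have hK' : ∀ k ∈ K, s < k + K.card := fun k hk => by have := hKbig k hk; omega
  have hbound := card_add_card_filter_le_of_intersecting hL.le hK' hsizes hintersecting
  rw [card_filter_card_le_eq_add_sum_choose s r, Fintype.card_fin, hK] at hbound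
  omega
end

section
/- Let t ≥ 2 and ℒ a set of s nonnegative integers. If 𝒜 = {A_1,...,A_m} is a family of subsets of {1,...,n} such that |A_{i_1} ∩ ... ∩ A_{i_t}| ∈ ℒ for every choice of t distinct members, then m ≤ (t-1)·[C(n,s) + C(n,s-1) + ... + C(n,0)]. -/
/-!
To a set `A` attach the function `f_A(X) = ∏_{l ∈ L, l < |A|} (|A ∩ X| - l)` on the cube. It is a
multilinear polynomial of degree at most `s`, so all `f_A` lie in a space of dimension
`D = ∑_{i ≤ s} C(n, i)`; moreover `f_A(X) = 0` exactly when `|A ∩ X| ∈ L` and `|A ∩ X| < |A|`.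

Scan the family by decreasing size, putting each set into one of `t - 1` classes in which its
polynomial stays linearly independent. Each class has at most `D` members, so if `m > (t - 1) D`
some `A` fits nowhere: `f_A` is in the span of the `f_B` over the larger sets `B ≠ A` of every
class `J_1, …, J_{t-1}`. Now `|A ∩ B_1 ∩ ⋯ ∩ B_{t-1}| ∈ L` for all `B_i ∈ J_i`. Evaluating the span
relation for `J_1` at `y = A ∩ B_2 ∩ ⋯ ∩ B_{t-1}`, where every `f_B` with `B ∈ J_1` vanishes
(`B ⊆ y ⊆ A` is impossible), gives `|y| ∈ L`; this removes `B_1`. After `t - 1` such steps we reach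
`f_A(A) = 0`, which is absurd.
-/

open Finset Submodule Module

theorem card_filter_card_le_eq_sum_choose {α : Type*} [Fintype α] (k : ℕ) :
    #{S : Finset α | #S ≤ k} = ∑ i ∈ range (k + 1), (Fintype.card α).choose i := by
  calc #{S : Finset α | #S ≤ k} = #{S : Finset α | #S ∈ range (k + 1)} := by simp
    _ = ∑ i ∈ range (k + 1), #{S : Finset α | #S = i} :=
        (sum_card_fiberwise_eq_card_filter _ _ _).symm
    _ = _ := by simp

section LowDegree

variable (R : Type*) {α : Type*} [CommRing R] [DecidableEq α]

/-- `subsetIndicator R S` is the monomial `∏_{i ∈ S} xᵢ` on the cube `Finset α`, so `lowDegree R α k`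
is the space of multilinear polynomials of degree at most `k`. -/
def subsetIndicator (S X : Finset α) : R := if S ⊆ X then 1 else 0

variable (α) in
def lowDegree (k : ℕ) : Submodule R (Finset α → R) :=
  span R (subsetIndicator R '' {S | #S ≤ k})

variable {R}

theorem subsetIndicator_mul_subsetIndicator (S T : Finset α) :
    subsetIndicator R S * subsetIndicator R T = subsetIndicator R (S ∪ T) := by
  ext X
  by_cases hS : S ⊆ X <;> by_cases hT : T ⊆ X <;> simp [subsetIndicator, union_subset_iff, *]

theorem subsetIndicator_mem_lowDegree {S : Finset α} {k : ℕ} (hS : #S ≤ k) :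
    subsetIndicator R S ∈ lowDegree R α k :=
  subset_span ⟨S, hS, rfl⟩

theorem lowDegree_mono : Monotone (lowDegree R α) := fun _ _ hkk' =>
  span_mono (Set.image_mono fun _ hS => le_trans hS hkk')

theorem one_mem_lowDegree_zero : (1 : Finset α → R) ∈ lowDegree R α 0 := by
  convert subsetIndicator_mem_lowDegree (R := R) (card_empty (α := α)).le
  ext X
  simp [subsetIndicator]

theorem mul_mem_lowDegree {f g : Finset α → R} {k l : ℕ} (hf : f ∈ lowDegree R α k)
    (hg : g ∈ lowDegree R α l) : f * g ∈ lowDegree R α (k + l) := by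
  refine (span_mul_span R _ _).le.trans (span_le.2 ?_) (mul_mem_mul hf hg)
  rintro _ ⟨_, ⟨S, hS, rfl⟩, _, ⟨T, hT, rfl⟩, rfl⟩
  change subsetIndicator R S * subsetIndicator R T ∈ _
  rw [subsetIndicator_mul_subsetIndicator]
  exact subsetIndicator_mem_lowDegree ((card_union_le S T).trans (add_le_add hS hT))

theorem prod_mem_lowDegree {ι : Type*} (P : Finset ι) {f : ι → Finset α → R}
    (hf : ∀ i ∈ P, f i ∈ lowDegree R α 1) : ∏ i ∈ P, f i ∈ lowDegree R α #P := by
  classical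
  induction P using Finset.induction_on with
  | empty => exact one_mem_lowDegree_zero
  | insert i P hi ih =>
    rw [prod_insert hi, card_insert_of_notMem hi, add_comm]
    exact mul_mem_lowDegree (hf i (mem_insert_self i P))
      (ih fun j hj => hf j (mem_insert_of_mem hj))

theorem card_inter_sub_mem_lowDegree_one (A : Finset α) (c : R) :
    (fun X => (#(A ∩ X) : R) - c) ∈ lowDegree R α 1 := by
  have hcard : (fun X => (#(A ∩ X) : R)) = ∑ j ∈ A, subsetIndicator R {j} := by
    ext X
    simp [subsetIndicator]
  have hconst : (fun _ => c) = c • (1 : Finset α → R) := by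
    ext; simp
  refine sub_mem ?_ ?_
  · rw [hcard]
    exact sum_mem fun j _ => subsetIndicator_mem_lowDegree (card_singleton j).le
  · rw [hconst]
    exact lowDegree_mono zero_le_one (smul_mem _ c one_mem_lowDegree_zero)

theorem finrank_lowDegree_le [Fintype α] [StrongRankCondition R] (k : ℕ) :
    finrank R (lowDegree R α k) ≤ ∑ i ∈ range (k + 1), (Fintype.card α).choose i := by
  classical
  have : subsetIndicator R '' {S : Finset α | #S ≤ k} =
      ↑(({S | #S ≤ k} : Finset (Finset α)).image (subsetIndicator R)) := by
    simp
  rw [lowDegree, this, ← card_filter_card_le_eq_sum_choose]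
  exact (finrank_span_finset_le_card _).trans card_image_le

end LowDegree

section Greedy

variable {ι κ K V β : Type*} [DecidableEq ι] [DecidableEq κ] [Field K] [AddCommGroup V]
  [Module K V] [LinearOrder β] (f : ι → V) (w : ι → β)

theorem exists_linearIndepOn_coloring_or_mem_span [Nonempty κ] (𝒜 : Finset ι) :
    (∃ c : ι → κ, ∀ k, LinearIndepOn K f {b | b ∈ 𝒜 ∧ c b = k}) ∨
      ∃ a ∈ 𝒜, ∃ c : ι → κ, ∀ k,
        f a ∈ span K (f '' {b | b ∈ 𝒜 ∧ b ≠ a ∧ w a ≤ w b ∧ c b = k}) := by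
  induction 𝒜 using Finset.induction_on_min_value w with
  | empty => exact .inl ⟨fun _ => Classical.arbitrary κ, by simp⟩
  | insert a s has hmin ih =>
    rcases ih with ⟨c, hc⟩ | ⟨a', ha', c, hc⟩
    · by_cases hspan : ∀ k, f a ∈ span K (f '' {b | b ∈ s ∧ c b = k})
      · refine .inr ⟨a, mem_insert_self a s, c, fun k => span_mono (Set.image_mono ?_) (hspan k)⟩
        rintro b ⟨hb, rfl⟩
        exact ⟨mem_insert_of_mem hb, ne_of_mem_of_not_mem hb has, hmin b hb, rfl⟩
      · obtain ⟨k, hk⟩ := not_forall.mp hspan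
        refine .inl ⟨Function.update c a k, fun k' => ?_⟩
        by_cases hkk' : k' = k
        · subst hkk'
          convert (hc k').insert hk using 1
          ext b
          by_cases hb : b = a <;> simp [hb, Function.update_of_ne]
        · convert hc k' using 1
          ext b
          by_cases hb : b = a
          · simp [hb, has, Ne.symm hkk']
          · simp [hb, Function.update_of_ne]
    · refine .inr ⟨a', mem_insert_of_mem ha', c, fun k => span_mono (Set.image_mono ?_) (hc k)⟩
      exact fun b hb => ⟨mem_insert_of_mem hb.1, hb.2⟩

theorem exists_mem_span_of_card_mul_finrank_lt [Fintype κ] [Nonempty κ] [FiniteDimensional K V]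
    (𝒜 : Finset ι) (h𝒜 : Fintype.card κ * finrank K V < #𝒜) :
    ∃ a ∈ 𝒜, ∃ c : ι → κ, ∀ k,
      f a ∈ span K (f '' {b | b ∈ 𝒜 ∧ b ≠ a ∧ w a ≤ w b ∧ c b = k}) := by
  refine (exists_linearIndepOn_coloring_or_mem_span f w 𝒜).resolve_left ?_
  rintro ⟨c, hc⟩
  have hclass : ∀ k, #{b ∈ 𝒜 | c b = k} ≤ finrank K V := fun k => by
    have hk : LinearIndepOn K f ↑{b ∈ 𝒜 | c b = k} := by simpa using hc k
    simpa using hk.fintype_card_le_finrank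
  refine h𝒜.not_ge ?_
  calc #𝒜 = ∑ k, #{b ∈ 𝒜 | c b = k} := card_eq_sum_card_fiberwise (by simp)
    _ ≤ ∑ _k : κ, finrank K V := sum_le_sum fun k _ => hclass k
    _ = Fintype.card κ * finrank K V := by simp

end Greedy

section IntersectionPoly

variable (K : Type*) {α : Type*} [Field K] [DecidableEq α]

def intersectionPoly (L : Finset ℕ) (A : Finset α) : Finset α → K :=
  ∏ l ∈ L with l < #A, fun X => (#(A ∩ X) : K) - l

variable {K} {L : Finset ℕ} {A : Finset α}

theorem intersectionPoly_eq_zero_iff [CharZero K] {X : Finset α} :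
    intersectionPoly K L A X = 0 ↔ #(A ∩ X) ∈ L ∧ #(A ∩ X) < #A := by
  simp [intersectionPoly, prod_apply, prod_eq_zero_iff, sub_eq_zero]

theorem intersectionPoly_mem_lowDegree (L : Finset ℕ) (A : Finset α) :
    intersectionPoly K L A ∈ lowDegree K α #L :=
  lowDegree_mono (card_filter_le L _)
    (prod_mem_lowDegree _ fun l _ => card_inter_sub_mem_lowDegree_one A (l : K))

theorem card_mem_and_lt_of_mem_span [CharZero K] {J : Set (Finset α)}
    (hJ : ∀ B ∈ J, B ≠ A ∧ #A ≤ #B)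
    (hspan : intersectionPoly K L A ∈ span K (intersectionPoly K L '' J)) {y : Finset α}
    (hy : y ⊆ A) (hyL : ∀ B ∈ J, #(B ∩ y) ∈ L) : #y ∈ L ∧ #y < #A := by
  have hvanish : intersectionPoly K L '' J ⊆
      (LinearMap.ker (LinearMap.proj y : (Finset α → K) →ₗ[K] K) : Set (Finset α → K)) := by
    rintro _ ⟨B, hB, rfl⟩
    refine intersectionPoly_eq_zero_iff.2 ⟨hyL B hB, ?_⟩
    refine (card_le_card inter_subset_left).lt_of_ne fun hcard => (hJ B hB).1 ?_
    have hBy : B ⊆ y := inter_eq_left.1 (eq_of_subset_of_card_le inter_subset_left hcard.ge)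
    exact eq_of_subset_of_card_le (hBy.trans hy) (hJ B hB).2
  have := intersectionPoly_eq_zero_iff.1 (span_le.2 hvanish hspan)
  rwa [inter_eq_right.2 hy] at this

theorem card_lt_of_forall_card_inter_inf_mem [CharZero K] [Fintype α] {r : ℕ}
    (J : Fin (r + 1) → Set (Finset α))
    (hJ : ∀ i, ∀ B ∈ J i, B ≠ A ∧ #A ≤ #B)
    (hspan : ∀ i, intersectionPoly K L A ∈ span K (intersectionPoly K L '' J i))
    {Z : Finset α} (hZ : Z ⊆ A)
    (hZL : ∀ b : Fin (r + 1) → Finset α, (∀ i, b i ∈ J i) → #(Z ∩ univ.inf b) ∈ L) :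
    #Z < #A := by
  induction r generalizing Z with
  | zero =>
    refine (card_mem_and_lt_of_mem_span (hJ 0) (hspan 0) hZ fun B hB => ?_).2
    simpa [inter_comm] using hZL (fun _ => B) fun i => Fin.fin_one_eq_zero i ▸ hB
  | succ r ih =>
    refine ih (fun i => J i.succ) (fun i => hJ i.succ) (fun i => hspan i.succ) hZ fun b hb => ?_
    refine (card_mem_and_lt_of_mem_span (hJ 0) (hspan 0) (inter_subset_left.trans hZ)
      fun B hB => ?_).1
    have := hZL (Fin.cons B b) (Fin.cases hB hb)
    simpa [Fin.univ_succ, inf_eq_inter, inter_left_comm] using this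

end IntersectionPoly

theorem card_inter_inf_mem {α : Type*} [Fintype α] [DecidableEq α] {L : Finset ℕ}
    {𝒜 : Finset (Finset α)} {r : ℕ} (h𝒜 : ∀ 𝒯 ⊆ 𝒜, #𝒯 = r + 2 → #(𝒯.inf id) ∈ L)
    {A : Finset α} (hA : A ∈ 𝒜) {b : Fin (r + 1) → Finset α} (hb : ∀ i, b i ∈ 𝒜)
    (hbA : ∀ i, b i ≠ A) (hinj : Function.Injective b) : #(A ∩ univ.inf b) ∈ L := by
  have hAb : A ∉ univ.image b := by simpa using hbA
  have := h𝒜 (insert A (univ.image b)) (insert_subset hA (by simpa [image_subset_iff] using hb))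
    (by rw [card_insert_of_notMem hAb, card_image_of_injective _ hinj]; simp)
  simpa [inf_image, inf_eq_inter] using this

theorem grolmusz_sudakov (n s t : ℕ) (ht : 2 ≤ t) (L : Finset ℕ) (hL : L.card = s)
    (𝒜 : Finset (Finset (Fin n)))
    (hintersecting : ∀ 𝒯 ⊆ 𝒜, 𝒯.card = t → (𝒯.inf id).card ∈ L) :
    𝒜.card ≤ (t - 1) * ∑ i ∈ Finset.range (s + 1), n.choose i := by
  obtain ⟨r, rfl⟩ : ∃ r, t = r + 2 := ⟨t - 2, by omega⟩
  by_contra! h𝒜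
  let F (B : Finset (Fin n)) : lowDegree ℚ (Fin n) s :=
    ⟨intersectionPoly ℚ L B, hL ▸ intersectionPoly_mem_lowDegree L B⟩
  have hdim : Fintype.card (Fin (r + 1)) * finrank ℚ (lowDegree ℚ (Fin n) s) < #𝒜 := by
    have := finrank_lowDegree_le (R := ℚ) (α := Fin n) s
    rw [Fintype.card_fin] at this ⊢
    exact (Nat.mul_le_mul_left (r + 1) this).trans_lt h𝒜
  obtain ⟨A, hA, c, hspan⟩ := exists_mem_span_of_card_mul_finrank_lt F card 𝒜 hdim
  let J (i : Fin (r + 1)) : Set (Finset (Fin n)) := {B | B ∈ 𝒜 ∧ B ≠ A ∧ #A ≤ #B ∧ c B = i}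
  have hspanJ (i) : intersectionPoly ℚ L A ∈ span ℚ (intersectionPoly ℚ L '' J i) := by
    simpa [Set.image_image, F] using
      apply_mem_span_image_of_mem_span (lowDegree ℚ (Fin n) s).subtype (hspan i)
  refine (card_lt_of_forall_card_inter_inf_mem J (fun i B hB => ⟨hB.2.1, hB.2.2.1⟩) hspanJ
    subset_rfl fun b hb => ?_).false
  exact card_inter_inf_mem hintersecting hA (fun i => (hb i).1) (fun i => (hb i).2.1)
    fun i j hij => (hb i).2.2.2.symm.trans (hij ▸ (hb j).2.2.2)
end

section
/- Let ℒ = {0,1,...,s-1} and let K be a set of positive integers each at least s. If 𝒜 is an ℒ-intersecting family of subsets of {1,...,n} with |A| ∈ K for every A ∈ 𝒜, then |𝒜| ≤ C(n,s). -/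
/-!
Every member of the family has at least `s` elements, so we may pick an `s`-subset of each.
Two distinct members meet in fewer than `s` points, so they cannot share the chosen subset:
the choice is an injection of the family into the `s`-subsets of the ground set.
-/

open Finset

theorem Finset.card_le_choose_of_card_inter_lt {α : Type*} [DecidableEq α] [Fintype α] {s : ℕ}
    {𝒜 : Finset (Finset α)} (hcard : ∀ A ∈ 𝒜, s ≤ #A)
    (hinter : ∀ A ∈ 𝒜, ∀ B ∈ 𝒜, A ≠ B → #(A ∩ B) < s) :
    #𝒜 ≤ (Fintype.card α).choose s := by
  choose! f hf_sub hf_card using fun A (hA : A ∈ 𝒜) => exists_subset_card_eq (hcard A hA)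
  have hf_inj : Set.InjOn f 𝒜 := by
    intro A hA B hB hAB
    by_contra hne
    have hs : s ≤ #(A ∩ B) :=
      hf_card A hA ▸ card_le_card (subset_inter (hf_sub A hA) (hAB ▸ hf_sub B hB))
    exact (hinter A hA B hB hne).not_ge hs
  calc #𝒜 ≤ #(powersetCard s (univ : Finset α)) :=
        card_le_card_of_injOn f
          (fun A hA => mem_powersetCard.2 ⟨subset_univ _, hf_card A hA⟩) hf_inj
    _ = (Fintype.card α).choose s := by rw [card_powersetCard, card_univ]

theorem snevily_range (n s : ℕ) (K : Finset ℕ)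
    (hK : ∀ k ∈ K, 0 < k ∧ s ≤ k)
    (𝒜 : Finset (Finset (Fin n)))
    (hsizes : ∀ A ∈ 𝒜, A.card ∈ K)
    (hintersecting : ∀ A ∈ 𝒜, ∀ B ∈ 𝒜, A ≠ B → (A ∩ B).card ∈ Finset.range s) :
    𝒜.card ≤ n.choose s := by
  simpa using Finset.card_le_choose_of_card_inter_lt (fun A hA => (hK _ (hsizes A hA)).2)
    fun A hA B hB hne => mem_range.1 (hintersecting A hA B hB hne)
end

section
/- If ℱ is a family of subsets of {1,...,n}, each of size at most k, and the intersection of all members of ℱ is empty, then there is a subfamily ℱ' ⊆ ℱ with |ℱ'| ≤ k+1 whose intersection is empty. -/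
theorem helly_type (n k : ℕ) (ℱ : Finset (Finset (Fin n)))
    (hsize : ∀ F ∈ ℱ, F.card ≤ k)
    (hempty : ℱ.inf id = ∅) :
    ∃ ℱ' ⊆ ℱ, ℱ'.card ≤ k + 1 ∧ ℱ'.inf id = ∅ := by
  rcases Finset.eq_empty_or_nonempty ℱ with h | ⟨F0, hF0⟩
  · exact ⟨∅, by simp, by simp, by rw [← h]; exact hempty⟩
  · have hx : ∀ x ∈ F0, ∃ F ∈ ℱ, x ∉ F := by
      intro x hxF0
      by_contra hc
      push_neg at hc
      have : x ∈ ℱ.inf id := Finset.mem_inf.mpr (fun F hF => hc F hF)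
      rw [hempty] at this
      exact absurd this (Finset.notMem_empty x)
    choose g hg1 hg2 using hx
    classical
    refine ⟨insert F0 (F0.attach.image (fun x => g x.1 x.2)), ?_, ?_, ?_⟩
    · intro F hF
      rcases Finset.mem_insert.mp hF with h | h
      · exact h ▸ hF0
      · obtain ⟨x, _, rfl⟩ := Finset.mem_image.mp h
        exact hg1 x.1 x.2
    · calc (insert F0 (F0.attach.image (fun x => g x.1 x.2))).card
          ≤ (F0.attach.image (fun x => g x.1 x.2)).card + 1 := Finset.card_insert_le _ _
        _ ≤ F0.attach.card + 1 := by gcongr; exact Finset.card_image_le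
        _ = F0.card + 1 := by rw [Finset.card_attach]
        _ ≤ k + 1 := by gcongr; exact hsize F0 hF0
    · apply Finset.eq_empty_of_forall_notMem
      intro x hx
      rw [Finset.mem_inf] at hx
      by_cases hxF0 : x ∈ F0
      · exact hg2 x hxF0 (hx (g x hxF0)
          (Finset.mem_insert_of_mem (Finset.mem_image.mpr ⟨⟨x, hxF0⟩, Finset.mem_attach _ _, rfl⟩)))
      · exact hxF0 (hx F0 (Finset.mem_insert_self _ _))
end

section
/- If n ≥ s², then C(n-2, s) + C(n-2, s-1) + ... + C(n-2, 0) ≤ C(n, s). -/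
lemma choose_double_le (m k : ℕ) (hm : 3 * k + 5 ≤ m) :
    2 * m.choose (k + 1) ≤ m.choose (k + 2) := by
  have h1 : m.choose (k + 2) * (k + 2) = m.choose (k + 1) * (m - (k + 1)) :=
    Nat.choose_succ_right_eq m (k + 1)
  have h2 : 2 * (k + 2) ≤ m - (k + 1) := by omega
  have : 2 * m.choose (k + 1) * (k + 2) ≤ m.choose (k + 2) * (k + 2) := by
    rw [h1]
    calc 2 * m.choose (k + 1) * (k + 2) = m.choose (k + 1) * (2 * (k + 2)) := by ring
    _ ≤ m.choose (k + 1) * (m - (k + 1)) := Nat.mul_le_mul_left _ h2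
  exact Nat.le_of_mul_le_mul_right this (by omega)

lemma aux_ineq (m t : ℕ) (hm : t * t + 4 * t + 2 ≤ m) :
    (m + 1).choose t ≤ m.choose (t + 1) := by
  cases t with
  | zero => simpa using Nat.le_of_lt (by omega : 1 < m)
  | succ j =>
    show (m + 1).choose (j + 1) ≤ m.choose (j + 2)
    have hjj : (j + 1) * (j + 1) + 4 * (j + 1) + 2 ≤ m := hm
    have hj2 : j * j + 6 * j + 7 ≤ m := by nlinarith
    have pas : (m + 1).choose (j + 1) = m.choose j + m.choose (j + 1) :=
      Nat.choose_succ_succ _ _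
    have h1 : m.choose j ≤ m.choose (j + 1) :=
      Nat.choose_le_succ_of_lt_half_left (by omega : j < m / 2)
    have h2 : 2 * m.choose (j + 1) ≤ m.choose (j + 2) :=
      choose_double_le m j (by omega)
    omega

theorem binomial_sum_le (n s : ℕ) (h : s ^ 2 ≤ n) :
    ∑ i ∈ Finset.range (s + 1), (n - 2).choose i ≤ n.choose s := by
  induction s with
  | zero => simp
  | succ s ih =>
    have h' : s * s + 2 * s + 1 ≤ n := by nlinarith
    rw [Finset.sum_range_succ]
    have ihs := ih (by nlinarith)
    have key : n.choose s + (n - 2).choose (s + 1) ≤ n.choose (s + 1) := by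
      by_cases hn : n < 2
      · have hs : s = 0 := by omega
        have hn1 : n = 1 := by omega
        subst hs hn1; decide
      · push_neg at hn
        obtain ⟨m, rfl⟩ : ∃ m, n = m + 2 := ⟨n - 2, by omega⟩
        have pascal1 : (m + 2).choose (s + 1) = (m + 1).choose s + (m + 1).choose (s + 1) :=
          Nat.choose_succ_succ _ _
        have pascal2 : (m + 1).choose (s + 1) = m.choose s + m.choose (s + 1) :=
          Nat.choose_succ_succ _ _
        have pascal3 : (m + 2).choose s ≤ (m + 1).choose s + m.choose s := by
          cases s with
          | zero => simp
          | succ k =>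
            show (m + 2).choose (k + 1) ≤ (m + 1).choose (k + 1) + m.choose (k + 1)
            have hk : k * k + 4 * k + 2 ≤ m := by nlinarith
            have pas : (m + 2).choose (k + 1) = (m + 1).choose k + (m + 1).choose (k + 1) :=
              Nat.choose_succ_succ _ _
            have h1 : (m + 1).choose k ≤ m.choose (k + 1) := aux_ineq m k hk
            omega
        have hm2 : (m + 2 - 2) = m := by omega
        rw [hm2]
        omega
    omega
end

section
/- Let ℒ = {l_1 < ... < l_s} be a set of s nonnegative integers. Suppose 𝒜 = {A_1,...,A_m} and ℬ = {B_1,...,B_m} are families of subsets of {1,...,n} such that |A_i ∩ B_j| ∈ ℒ for all i ≠ j, and A_i ⊆ B_i with |A_i| ∉ ℒ for every i. Then m ≤ C(n-1,s) + C(n-1,s-1) + ... + C(n-1,0). -/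
open Finset Function
open scoped fwdDiff
local notation "Δ" => fwdDiff (1:ℕ)

private lemma fwdDiff_zero_fun : Δ (0 : ℕ → ℚ) = 0 := by
  funext t; simp [fwdDiff]

private lemma fwdDiff_mul_linear (a : ℚ) : ∀ (k : ℕ) (g : ℕ → ℚ),
    Δ^[k] g = 0 → Δ^[k+1] (fun t => ((t:ℚ) + a) * g t) = 0 := by
  intro k
  induction k with
  | zero =>
    intro g hg
    have hg0 : g = 0 := hg
    have : (fun t : ℕ => ((t:ℚ) + a) * g t) = 0 := by
      funext t; rw [hg0]; simp
    rw [this]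
    simpa using fwdDiff_zero_fun
  | succ k IH =>
    intro g hg
    have key : Δ (fun t => ((t:ℚ) + a) * g t)
        = (fun t : ℕ => ((t:ℚ) + a) * (Δ g) t) + (g + Δ g) := by
      funext t
      simp only [fwdDiff, Pi.add_apply]
      push_cast
      ring
    have h2 : Δ^[k+1+1] (fun t => ((t:ℚ) + a) * g t)
        = Δ^[k+1] (Δ (fun t => ((t:ℚ) + a) * g t)) :=
      Function.iterate_succ_apply _ _ _
    rw [h2, key, fwdDiff_iter_add, fwdDiff_iter_add]
    have hΔg : Δ^[k] (Δ g) = 0 := by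
      rw [← Function.iterate_succ_apply]; exact hg
    have h3 : Δ^[k+1] (Δ g) = 0 := by
      rw [← Function.iterate_succ_apply, Function.iterate_succ_apply', hg]
      exact fwdDiff_zero_fun
    rw [IH _ hΔg, hg, h3]
    simp

private lemma fwdDiff_prod_vanish (L : Finset ℕ) (a : ℕ → ℚ) :
    Δ^[L.card + 1] (fun t : ℕ => ∏ l ∈ L, ((t:ℚ) + a l)) = 0 := by
  classical
  induction L using Finset.induction with
  | empty =>
    funext t
    simp [fwdDiff]
  | @insert l₀ L hl IH =>
    have hcard : (insert l₀ L).card = L.card + 1 := Finset.card_insert_of_notMem hl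
    have hfun : (fun t : ℕ => ∏ l ∈ insert l₀ L, ((t:ℚ) + a l))
        = fun t : ℕ => ((t:ℚ) + a l₀) * ∏ l ∈ L, ((t:ℚ) + a l) := by
      funext t; rw [Finset.prod_insert hl]
    rw [hcard, hfun]
    exact fwdDiff_mul_linear (a l₀) (L.card + 1) _ IH

private lemma newton_eval (L : Finset ℕ) (a : ℕ → ℚ) (s : ℕ) (hs : L.card = s) (M : ℕ) :
    (∏ l ∈ L, ((M:ℚ) + a l))
      = ∑ k ∈ Finset.range (s+1), (M.choose k : ℚ)
          * (Δ^[k] (fun t : ℕ => ∏ l ∈ L, ((t:ℚ) + a l)) 0) := by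
  set q : ℕ → ℚ := fun t => ∏ l ∈ L, ((t:ℚ) + a l) with hq
  have hvan : ∀ k, s + 1 ≤ k → Δ^[k] q = 0 := by
    intro k hk
    obtain ⟨j, rfl⟩ : ∃ j, k = j + (s+1) := ⟨k - (s+1), by omega⟩
    rw [Function.iterate_add_apply]
    have hv : Δ^[s+1] q = 0 := by
      rw [hq, ← hs]; exact fwdDiff_prod_vanish L a
    rw [hv]
    exact Function.iterate_fixed fwdDiff_zero_fun j
  have hGN := shift_eq_sum_fwdDiff_iter (1:ℕ) q M 0
  simp only [zero_add, smul_eq_mul, mul_one] at hGN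
  have step1 : q M = ∑ k ∈ Finset.range (M+1), M.choose k • (Δ^[k] q 0) := hGN
  have step2 : ∑ k ∈ Finset.range (M+1), M.choose k • (Δ^[k] q 0)
      = ∑ k ∈ Finset.range (M+s+2), M.choose k • (Δ^[k] q 0) := by
    apply Finset.sum_subset (Finset.range_subset_range.mpr (by omega))
    intro k _ hk2
    have : M < k := by simp only [Finset.mem_range] at hk2; omega
    rw [Nat.choose_eq_zero_of_lt this, zero_smul]
  have step3 : ∑ k ∈ Finset.range (s+1), M.choose k • (Δ^[k] q 0)
      = ∑ k ∈ Finset.range (M+s+2), M.choose k • (Δ^[k] q 0) := by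
    apply Finset.sum_subset (Finset.range_subset_range.mpr (by omega))
    intro k _ hk2
    have : s + 1 ≤ k := by simp only [Finset.mem_range] at hk2; omega
    rw [hvan k this]
    simp
  calc (∏ l ∈ L, ((M:ℚ) + a l)) = q M := rfl
    _ = ∑ k ∈ Finset.range (M+1), M.choose k • (Δ^[k] q 0) := step1
    _ = ∑ k ∈ Finset.range (M+s+2), M.choose k • (Δ^[k] q 0) := step2
    _ = ∑ k ∈ Finset.range (s+1), M.choose k • (Δ^[k] q 0) := step3.symm
    _ = ∑ k ∈ Finset.range (s+1), (M.choose k : ℚ) * (Δ^[k] q 0) := by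
        simp [nsmul_eq_mul]



private def Xfun (n : ℕ) (K : Finset (Fin n)) : Finset (Fin n) → ℚ :=
  fun Y => if K ⊆ Y then 1 else 0

private def gfun (n : ℕ) (L : Finset ℕ) (c : ℚ) (A' : Finset (Fin n)) :
    Finset (Fin n) → ℚ :=
  fun Y => ∏ l ∈ L, (((A' ∩ Y).card : ℚ) + (c - (l:ℚ)))

private lemma gfun_eq_sum (n s : ℕ) (L : Finset ℕ) (hL : L.card = s) (c : ℚ)
    (A' : Finset (Fin n)) :
    gfun n L c A' = ∑ K ∈ A'.powerset.filter (fun K => K.card ≤ s),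
      (Δ^[K.card] (fun t : ℕ => ∏ l ∈ L, ((t:ℚ) + (c - (l:ℚ)))) 0) • Xfun n K := by
  classical
  funext Y
  set w : ℕ → ℚ := fun k => Δ^[k] (fun t : ℕ => ∏ l ∈ L, ((t:ℚ) + (c - (l:ℚ)))) 0 with hw
  have hRHS : (∑ K ∈ A'.powerset.filter (fun K => K.card ≤ s), w K.card • Xfun n K) Y
      = ∑ K ∈ (A' ∩ Y).powerset.filter (fun K => K.card ≤ s), w K.card := by
    rw [Finset.sum_apply]
    have h1 : ∀ K ∈ A'.powerset.filter (fun K => K.card ≤ s),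
        (w K.card • Xfun n K) Y = if K ⊆ Y then w K.card else 0 := by
      intro K _
      simp [Xfun, smul_eq_mul, mul_ite]
    rw [Finset.sum_congr rfl h1, ← Finset.sum_filter]
    apply Finset.sum_congr _ (fun _ _ => rfl)
    ext K
    simp only [Finset.mem_filter, Finset.mem_powerset, Finset.subset_inter_iff]
    tauto
  rw [hRHS]
  have hfib : ∑ K ∈ (A' ∩ Y).powerset.filter (fun K => K.card ≤ s), w K.card
      = ∑ k ∈ Finset.range (s+1), (((A' ∩ Y).card).choose k : ℚ) * w k := by
    rw [← Finset.sum_fiberwise_of_maps_to (g := Finset.card)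
      (t := Finset.range (s+1)) (by
        intro K hK
        simp only [Finset.mem_filter] at hK
        simp only [Finset.mem_range]
        omega)]
    apply Finset.sum_congr rfl
    intro k hk
    have hk' : k ≤ s := by simp only [Finset.mem_range] at hk; omega
    have hset : ((A' ∩ Y).powerset.filter (fun K => K.card ≤ s)).filter
        (fun K => K.card = k) = Finset.powersetCard k (A' ∩ Y) := by
      ext K
      simp only [Finset.mem_filter, Finset.mem_powerset, Finset.mem_powersetCard]
      constructor
      · rintro ⟨⟨h1, _⟩, h3⟩; exact ⟨h1, h3⟩
      · rintro ⟨h1, h2⟩; exact ⟨⟨h1, by omega⟩, h2⟩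
    rw [hset]
    have : ∀ K ∈ Finset.powersetCard k (A' ∩ Y), w K.card = w k := by
      intro K hK
      rw [(Finset.mem_powersetCard.mp hK).2]
    rw [Finset.sum_congr rfl this, Finset.sum_const, Finset.card_powersetCard,
      nsmul_eq_mul]
  rw [hfib]
  exact newton_eval L (fun l => c - (l:ℚ)) s hL ((A' ∩ Y).card)



theorem cross_intersecting_nested (n s m : ℕ) (L : Finset ℕ) (hL : L.card = s)
    (A B : Fin m → Finset (Fin n))
    (hcross : ∀ i j, i ≠ j → ((A i) ∩ (B j)).card ∈ L)
    (hsub : ∀ i, A i ⊆ B i)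
    (hsizes : ∀ i, (A i).card ∉ L) :
    m ≤ ∑ i ∈ Finset.range (s + 1), (n - 1).choose i := by

  classical
  have htarget1 : 1 ≤ ∑ i ∈ Finset.range (s + 1), (n - 1).choose i := by
    calc 1 = (n-1).choose 0 := by simp
      _ ≤ _ := Finset.single_le_sum (f := fun i => (n-1).choose i)
            (fun i _ => Nat.zero_le _) (by simp)
  rcases le_or_gt m 1 with hm1 | hm1
  · exact le_trans hm1 htarget1
  rcases Nat.eq_zero_or_pos n with hn | hn
  · exfalso
    subst hn
    have h01 : (⟨0, by omega⟩ : Fin m) ≠ (⟨1, by omega⟩ : Fin m) := by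
      simp [Fin.ext_iff]
    have hcr := hcross ⟨0, by omega⟩ ⟨1, by omega⟩ h01
    have hempty : ∀ S : Finset (Fin 0), S = ∅ := fun S => Finset.eq_empty_of_isEmpty S
    apply hsizes (⟨0, by omega⟩ : Fin m)
    rw [hempty (A ⟨0, by omega⟩), Finset.card_empty]
    rwa [hempty (A ⟨0, by omega⟩ ∩ B ⟨1, by omega⟩), Finset.card_empty] at hcr
  -- main case
  set v : Fin n := ⟨0, hn⟩ with hv
  set c : Fin m → ℚ := fun i => if v ∈ A i then 1 else 0 with hc
  set g : Fin m → (Finset (Fin n) → ℚ) := fun i => gfun n L (c i) ((A i).erase v) with hg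
  have harg : ∀ i j, (v ∉ A i ∨ v ∈ B j) →
      ((((A i).erase v ∩ (B j).erase v).card : ℚ) + c i) = (((A i) ∩ (B j)).card : ℚ) := by
    intro i j hd
    by_cases hvA : v ∈ A i
    · have hvB : v ∈ B j := hd.resolve_left (fun h => h hvA)
      have hseteq : (A i).erase v ∩ (B j).erase v = ((A i) ∩ (B j)).erase v := by
        ext a; simp only [Finset.mem_inter, Finset.mem_erase]; tauto
      have hmem : v ∈ (A i) ∩ (B j) := Finset.mem_inter.mpr ⟨hvA, hvB⟩
      have hcard := Finset.card_erase_add_one hmem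
      have hci : c i = 1 := if_pos hvA
      rw [hseteq, hci, ← hcard]
      push_cast
      ring
    · have hseteq : (A i).erase v ∩ (B j).erase v = (A i) ∩ (B j) := by
        ext a
        simp only [Finset.mem_inter, Finset.mem_erase]
        constructor
        · rintro ⟨⟨_, ha⟩, ⟨_, hb⟩⟩; exact ⟨ha, hb⟩
        · rintro ⟨ha, hb⟩
          have hne : a ≠ v := fun h => hvA (h ▸ ha)
          exact ⟨⟨hne, ha⟩, hne, hb⟩
      have hci : c i = 0 := if_neg hvA
      rw [hseteq, hci, add_zero]
  have hgever : ∀ i j, (v ∉ A i ∨ v ∈ B j) →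
      g i ((B j).erase v) = ∏ l ∈ L, ((((A i) ∩ (B j)).card : ℚ) - (l:ℚ)) := by
    intro i j hd
    have h := harg i j hd
    show (∏ l ∈ L, ((((A i).erase v ∩ (B j).erase v).card : ℚ) + (c i - (l:ℚ)))) = _
    apply Finset.prod_congr rfl
    intro l _
    rw [← h]; ring
  have hzero : ∀ i j, i ≠ j → (v ∉ A i ∨ v ∈ B j) → g i ((B j).erase v) = 0 := by
    intro i j hij hd
    rw [hgever i j hd]
    exact Finset.prod_eq_zero (hcross i j hij) (by simp)
  have hdiag : ∀ i, g i ((B i).erase v) ≠ 0 := by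
    intro i
    have hd : v ∉ A i ∨ v ∈ B i := by
      by_cases hvA : v ∈ A i
      · exact Or.inr (hsub i hvA)
      · exact Or.inl hvA
    rw [hgever i i hd, Finset.inter_eq_left.mpr (hsub i)]
    rw [Finset.prod_ne_zero_iff]
    intro l hl heq
    apply hsizes i
    have h1 : ((A i).card : ℚ) = (l:ℚ) := by
      have := sub_eq_zero.mp heq; linarith
    have h2 : (A i).card = l := by exact_mod_cast h1
    rwa [h2]
  have hgli : LinearIndependent ℚ g := by
    rw [Fintype.linearIndependent_iff]
    intro coef hsum
    have hev : ∀ j, ∑ i, coef i * g i ((B j).erase v) = 0 := by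
      intro j
      have h := congrFun hsum ((B j).erase v)
      simpa [Finset.sum_apply, smul_eq_mul] using h
    have phase1 : ∀ j, v ∈ B j → coef j = 0 := by
      intro j hvB
      have h := hev j
      have hterm : ∀ i ∈ Finset.univ, i ≠ j → coef i * g i ((B j).erase v) = 0 := by
        intro i _ hij
        rw [hzero i j hij (Or.inr hvB), mul_zero]
      rw [Finset.sum_eq_single j hterm (fun hne => absurd (Finset.mem_univ j) hne)] at h
      exact (mul_eq_zero.mp h).resolve_right (hdiag j)
    intro j
    by_cases hvB : v ∈ B j
    · exact phase1 j hvB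
    · have h := hev j
      have hterm : ∀ i ∈ Finset.univ, i ≠ j → coef i * g i ((B j).erase v) = 0 := by
        intro i _ hij
        by_cases hvA : v ∈ A i
        · rw [phase1 i (hsub i hvA), zero_mul]
        · rw [hzero i j hij (Or.inl hvA), mul_zero]
      rw [Finset.sum_eq_single j hterm (fun hne => absurd (Finset.mem_univ j) hne)] at h
      exact (mul_eq_zero.mp h).resolve_right (hdiag j)
  set KK : Finset (Finset (Fin n)) :=
    (Finset.range (s+1)).biUnion
      (fun k => Finset.powersetCard k (Finset.univ.erase v)) with hKK
  set genSet : Finset (Finset (Fin n) → ℚ) := KK.image (Xfun n) with hgen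
  have hmem : ∀ i, g i ∈ Submodule.span ℚ (genSet : Set (Finset (Fin n) → ℚ)) := by
    intro i
    show gfun n L (c i) ((A i).erase v) ∈ _
    rw [gfun_eq_sum n s L hL (c i) ((A i).erase v)]
    apply Submodule.sum_mem
    intro K hK
    apply Submodule.smul_mem
    apply Submodule.subset_span
    simp only [hgen, Finset.coe_image, Set.mem_image, Finset.mem_coe]
    refine ⟨K, ?_, rfl⟩
    simp only [Finset.mem_filter, Finset.mem_powerset] at hK
    rw [hKK]
    apply Finset.mem_biUnion.mpr
    refine ⟨K.card, Finset.mem_range.mpr (by omega), ?_⟩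
    apply Finset.mem_powersetCard.mpr
    refine ⟨?_, rfl⟩
    intro a ha
    have haA : a ∈ (A i).erase v := hK.1 ha
    simp only [Finset.mem_erase] at haA ⊢
    exact ⟨haA.1, Finset.mem_univ a⟩
  have hfd : FiniteDimensional ℚ
      (Submodule.span ℚ (genSet : Set (Finset (Fin n) → ℚ))) :=
    FiniteDimensional.span_of_finite ℚ genSet.finite_toSet
  have hcard1 : m ≤ Module.finrank ℚ
      (Submodule.span ℚ (genSet : Set (Finset (Fin n) → ℚ))) := by
    have hli' : LinearIndependent ℚ (fun i : Fin m =>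
        (⟨g i, hmem i⟩ : Submodule.span ℚ (genSet : Set (Finset (Fin n) → ℚ)))) := by
      apply LinearIndependent.of_comp (Submodule.span ℚ (genSet : Set (Finset (Fin n) → ℚ))).subtype
      exact hgli
    simpa using hli'.fintype_card_le_finrank
  have hcard2 : Module.finrank ℚ
      (Submodule.span ℚ (genSet : Set (Finset (Fin n) → ℚ))) ≤ genSet.card :=
    finrank_span_finset_le_card genSet
  have hcard3 : genSet.card ≤ KK.card := Finset.card_image_le
  have hcard4 : KK.card ≤ ∑ i ∈ Finset.range (s+1), (n-1).choose i := by
    apply le_trans Finset.card_biUnion_le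
    apply Finset.sum_le_sum
    intro k _
    rw [Finset.card_powersetCard, Finset.card_erase_of_mem (Finset.mem_univ v),
      Finset.card_univ, Fintype.card_fin]
  omega
end

section
/- Let ℒ = {l_1 < ... < l_s} be a set of s nonnegative integers. If 𝒜 = {A_1,...,A_m} is a family of subsets of {1,...,n} with |A_i ∩ A_j| ∈ ℒ for all i ≠ j and |A_i| ∉ ℒ for every i, then m ≤ C(n-1,s) + C(n-1,s-1) + ... + C(n-1,0). -/
open Finset Submodule

private noncomputable def fwchi {n : ℕ} (T : Finset (Fin n)) : Finset (Fin n) → ℚ :=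
  fun B => if T ⊆ B then 1 else 0

private lemma fw_chi_span {n : ℕ} (A : Finset (Fin n)) (K : Finset ℕ) :
    (fun B => ∏ l ∈ K, (((A ∩ B).card : ℚ) - (l : ℚ))) ∈
      Submodule.span ℚ {f : Finset (Fin n) → ℚ |
        ∃ T : Finset (Fin n), T ⊆ A ∧ T.card ≤ K.card ∧ f = fwchi T} := by
  classical
  induction K using Finset.induction_on with
  | empty =>
      have h : (fun B : Finset (Fin n) => ∏ l ∈ (∅ : Finset ℕ), (((A ∩ B).card : ℚ) - (l : ℚ)))
          = fwchi (∅ : Finset (Fin n)) := by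
        funext B; simp [fwchi]
      rw [h]
      exact subset_span ⟨∅, by simp, by simp, rfl⟩
  | @insert a K ha ih =>
      set c : Finset (Fin n) → ℚ := fun B => ((A ∩ B).card : ℚ) - (a : ℚ) with hc
      have hprod : (fun B => ∏ l ∈ insert a K, (((A ∩ B).card : ℚ) - (l : ℚ)))
          = c * (fun B => ∏ l ∈ K, (((A ∩ B).card : ℚ) - (l : ℚ))) := by
        funext B
        simp [Finset.prod_insert ha, hc]
      rw [hprod]
      have key : ∀ T : Finset (Fin n), T ⊆ A → T.card ≤ K.card →
          c * fwchi T ∈ Submodule.span ℚ {f : Finset (Fin n) → ℚ |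
            ∃ T : Finset (Fin n), T ⊆ A ∧ T.card ≤ (insert a K).card ∧ f = fwchi T} := by
        intro T hTA hTc
        have hid : c * fwchi T = (∑ i ∈ A, fwchi (insert i T)) - (a : ℚ) • fwchi T := by
          funext B
          simp only [Pi.mul_apply, Pi.sub_apply, Pi.smul_apply, Finset.sum_apply,
            smul_eq_mul, hc]
          by_cases hTB : T ⊆ B
          · have h1 : ∀ i ∈ A, fwchi (insert i T) B = if i ∈ B then (1:ℚ) else 0 := by
              intro i _
              by_cases hiB : i ∈ B
              · simp [fwchi, Finset.insert_subset_iff, hiB, hTB]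
              · simp [fwchi, Finset.insert_subset_iff, hiB]
            rw [Finset.sum_congr rfl h1, Finset.sum_boole]
            have h2 : Finset.filter (fun i => i ∈ B) A = A ∩ B :=
              Finset.filter_mem_eq_inter
            rw [h2]
            simp [fwchi, hTB]
          · have h1 : ∀ i ∈ A, fwchi (insert i T) B = 0 := by
              intro i _
              have : ¬ insert i T ⊆ B := by
                intro hcon
                exact hTB (Finset.Subset.trans (Finset.subset_insert i T) hcon)
              simp [fwchi, this]
            rw [Finset.sum_congr rfl h1]
            simp [fwchi, hTB]
        rw [hid]
        refine sub_mem (Submodule.sum_mem _ fun i hiA => subset_span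
            ⟨insert i T, Finset.insert_subset hiA hTA, ?_, rfl⟩)
          (Submodule.smul_mem _ _ (subset_span ⟨T, hTA, ?_, rfl⟩))
        · calc (insert i T).card ≤ T.card + 1 := Finset.card_insert_le _ _
            _ ≤ K.card + 1 := by omega
            _ = (insert a K).card := (Finset.card_insert_of_notMem ha).symm
        · rw [Finset.card_insert_of_notMem ha]; omega
      have hmem : c * (fun B => ∏ l ∈ K, (((A ∩ B).card : ℚ) - (l : ℚ))) ∈
          Submodule.map (LinearMap.mulLeft ℚ c)
            (Submodule.span ℚ {f : Finset (Fin n) → ℚ |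
              ∃ T : Finset (Fin n), T ⊆ A ∧ T.card ≤ K.card ∧ f = fwchi T}) :=
        ⟨_, ih, rfl⟩
      rw [Submodule.map_span] at hmem
      refine Submodule.span_le.2 ?_ hmem
      rintro f ⟨g, ⟨T, h1, h2, rfl⟩, rfl⟩
      exact key T h1 h2

theorem frankl_wilson_strengthened (n s : ℕ) (L : Finset ℕ) (hL : L.card = s)
    (𝒜 : Finset (Finset (Fin n)))
    (hintersecting : ∀ A ∈ 𝒜, ∀ B ∈ 𝒜, A ≠ B → (A ∩ B).card ∈ L)
    (hsizes : ∀ A ∈ 𝒜, A.card ∉ L) :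
    𝒜.card ≤ ∑ i ∈ Finset.range (s + 1), (n - 1).choose i := by
  classical
  by_cases hn : n = 0
  · subst hn
    have h1 : 𝒜.card ≤ 1 := Finset.card_le_one.mpr (by
      intro a _ b _
      rw [Finset.eq_empty_of_isEmpty a, Finset.eq_empty_of_isEmpty b])
    have h2 : 1 ≤ ∑ i ∈ Finset.range (s + 1), (0 - 1).choose i := by
      have := Finset.single_le_sum (f := fun i => (0 - 1).choose i)
        (fun i _ => Nat.zero_le _) (show (0:ℕ) ∈ Finset.range (s + 1) by simp)
      simpa using this
    omega
  · have hn1 : 1 ≤ n := Nat.one_le_iff_ne_zero.mpr hn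
    set e : Fin n := ⟨n - 1, by omega⟩ with he
    set L₁ : Finset ℕ := (L.erase 0).image (fun l => l - 1) with hL₁
    set φ : Finset (Fin n) → Finset (Fin n) → ℚ := fun A =>
      if e ∈ A then (fun B => ∏ l ∈ L₁, (((A.erase e ∩ B).card : ℚ) - (l : ℚ)))
      else (fun B => ∏ l ∈ L, (((A ∩ B).card : ℚ) - (l : ℚ))) with hφ
    -- diagonal nonzero
    have hdiag : ∀ A ∈ 𝒜, φ A A ≠ 0 := by
      intro A hA
      by_cases heA : e ∈ A
      · have h1 : A.erase e ∩ A = A.erase e := Finset.inter_eq_left.mpr (Finset.erase_subset _ _)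
        have h2 : (A.erase e).card = A.card - 1 := Finset.card_erase_of_mem heA
        simp only [hφ, if_pos heA]
        rw [Finset.prod_ne_zero_iff]
        intro l hl
        simp only [hL₁, Finset.mem_image, Finset.mem_erase] at hl
        obtain ⟨l', ⟨hl'0, hl'L⟩, rfl⟩ := hl
        rw [h1, h2]
        intro hcon
        have hcon' : A.card - 1 = l' - 1 := by exact_mod_cast sub_eq_zero.mp hcon
        have hApos : 1 ≤ A.card := Finset.card_pos.mpr ⟨e, heA⟩
        have : A.card = l' := by omega
        exact hsizes A hA (this ▸ hl'L)
      · simp only [hφ, if_neg heA]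
        rw [Finset.prod_ne_zero_iff]
        intro l hl
        rw [Finset.inter_self]
        intro hcon
        have : A.card = l := by exact_mod_cast sub_eq_zero.mp hcon
        exact hsizes A hA (this ▸ hl)
    -- off-diagonal zero, case e ∉ A
    have hoff1 : ∀ A ∈ 𝒜, e ∉ A → ∀ B ∈ 𝒜, B ≠ A → φ A B = 0 := by
      intro A hA heA B hB hBA
      have hc : (A ∩ B).card ∈ L := hintersecting A hA B hB (fun h => hBA h.symm)
      simp only [hφ, if_neg heA]
      exact Finset.prod_eq_zero hc (by simp)
    -- off-diagonal zero, case e ∈ A, e ∈ B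
    have hoff2 : ∀ A ∈ 𝒜, e ∈ A → ∀ B ∈ 𝒜, B ≠ A → e ∈ B → φ A B = 0 := by
      intro A hA heA B hB hBA heB
      have hc : (A ∩ B).card ∈ L := hintersecting A hA B hB (fun h => hBA h.symm)
      have hce : e ∈ A ∩ B := Finset.mem_inter.mpr ⟨heA, heB⟩
      have h1 : A.erase e ∩ B = (A ∩ B).erase e := Finset.erase_inter e A B
      have h2 : (A.erase e ∩ B).card = (A ∩ B).card - 1 := by
        rw [h1, Finset.card_erase_of_mem hce]
      have hpos : 1 ≤ (A ∩ B).card := Finset.card_pos.mpr ⟨e, hce⟩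
      have hmem : (A ∩ B).card - 1 ∈ L₁ := by
        simp only [hL₁, Finset.mem_image, Finset.mem_erase]
        exact ⟨(A ∩ B).card, ⟨by omega, hc⟩, rfl⟩
      simp only [hφ, if_pos heA]
      refine Finset.prod_eq_zero hmem ?_
      rw [h2]
      simp
    -- the monomial index set
    set Ts : Finset (Finset (Fin n)) :=
      (Finset.range (s + 1)).biUnion (fun i => (Finset.univ.erase e).powersetCard i) with hTs
    have hTsmem : ∀ T : Finset (Fin n), T ⊆ Finset.univ.erase e → T.card ≤ s → T ∈ Ts := by
      intro T hsub hcard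
      rw [hTs, Finset.mem_biUnion]
      exact ⟨T.card, Finset.mem_range.mpr (by omega), Finset.mem_powersetCard.mpr ⟨hsub, rfl⟩⟩
    -- span membership
    have hφspan : ∀ A ∈ 𝒜, φ A ∈ Submodule.span ℚ ((Ts.image fwchi : Finset (Finset (Fin n) → ℚ)) : Set (Finset (Fin n) → ℚ)) := by
      intro A hA
      by_cases heA : e ∈ A
      · have h := fw_chi_span (A.erase e) L₁
        simp only [hφ, if_pos heA]
        refine Submodule.span_mono ?_ h
        rintro f ⟨T, hT1, hT2, rfl⟩
        have hTcard : T.card ≤ s := by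
          have hc1 : L₁.card ≤ (L.erase 0).card := Finset.card_image_le
          have hc2 : (L.erase 0).card ≤ L.card := Finset.card_erase_le
          omega
        have hTsub : T ⊆ Finset.univ.erase e :=
          Finset.Subset.trans hT1 (Finset.erase_subset_erase e (Finset.subset_univ A))
        exact Finset.mem_coe.mpr (Finset.mem_image.mpr ⟨T, hTsmem T hTsub hTcard, rfl⟩)
      · have h := fw_chi_span A L
        simp only [hφ, if_neg heA]
        refine Submodule.span_mono ?_ h
        rintro f ⟨T, hT1, hT2, rfl⟩
        have hTcard : T.card ≤ s := by omega
        have hTsub : T ⊆ Finset.univ.erase e :=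
          Finset.Subset.trans hT1 (Finset.subset_erase.mpr ⟨Finset.subset_univ A, heA⟩)
        exact Finset.mem_coe.mpr (Finset.mem_image.mpr ⟨T, hTsmem T hTsub hTcard, rfl⟩)
    -- linear independence
    set ψ : {A // A ∈ 𝒜} → (Finset (Fin n) → ℚ) := fun A => φ A.1 with hψ
    have hli : LinearIndependent ℚ ψ := by
      rw [Fintype.linearIndependent_iff]
      intro g hg
      have hev : ∀ C : Finset (Fin n), ∑ A : {A // A ∈ 𝒜}, g A * φ A.1 C = 0 := by
        intro C
        have := congrFun hg C
        simpa [hψ, Finset.sum_apply] using this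
      have step1 : ∀ B : {A // A ∈ 𝒜}, e ∈ B.1 → g B = 0 := by
        intro B heB
        have h := hev B.1
        rw [Finset.sum_eq_single_of_mem B (Finset.mem_univ B) (fun A _ hAB => ?_)] at h
        · rcases mul_eq_zero.mp h with h' | h'
          · exact h'
          · exact absurd h' (hdiag B.1 B.2)
        · have hne : A.1 ≠ B.1 := fun hcon => hAB (Subtype.ext hcon)
          by_cases heA : e ∈ A.1
          · rw [hoff2 A.1 A.2 heA B.1 B.2 (fun hcon => hne hcon.symm) heB, mul_zero]
          · rw [hoff1 A.1 A.2 heA B.1 B.2 hne.symm, mul_zero]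
      intro B
      by_cases heB : e ∈ B.1
      · exact step1 B heB
      · have h := hev B.1
        rw [Finset.sum_eq_single_of_mem B (Finset.mem_univ B) (fun A _ hAB => ?_)] at h
        · rcases mul_eq_zero.mp h with h' | h'
          · exact h'
          · exact absurd h' (hdiag B.1 B.2)
        · have hne : A.1 ≠ B.1 := fun hcon => hAB (Subtype.ext hcon)
          by_cases heA : e ∈ A.1
          · rw [step1 A heA, zero_mul]
          · rw [hoff1 A.1 A.2 heA B.1 B.2 hne.symm, mul_zero]
    -- counting
    have hrange : Submodule.span ℚ (Set.range ψ) ≤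
        Submodule.span ℚ ((Ts.image fwchi : Finset (Finset (Fin n) → ℚ)) : Set (Finset (Fin n) → ℚ)) := by
      rw [Submodule.span_le]
      rintro f ⟨A, rfl⟩
      exact hφspan A.1 A.2
    have hcard1 : 𝒜.card = Fintype.card {A // A ∈ 𝒜} := (Fintype.card_coe 𝒜).symm
    have hcard2 : Fintype.card {A // A ∈ 𝒜} =
        Module.finrank ℚ (Submodule.span ℚ (Set.range ψ)) := (finrank_span_eq_card hli).symm
    have hcard3 : Module.finrank ℚ (Submodule.span ℚ (Set.range ψ)) ≤
        Module.finrank ℚ (Submodule.span ℚ ((Ts.image fwchi : Finset (Finset (Fin n) → ℚ)) : Set (Finset (Fin n) → ℚ))) :=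
      Submodule.finrank_mono hrange
    have hcard4 : Module.finrank ℚ (Submodule.span ℚ ((Ts.image fwchi : Finset (Finset (Fin n) → ℚ)) : Set (Finset (Fin n) → ℚ))) ≤
        (Ts.image fwchi).card := finrank_span_finset_le_card _
    have hcard5 : (Ts.image fwchi).card ≤ Ts.card := Finset.card_image_le
    have hcard6 : Ts.card ≤ ∑ i ∈ Finset.range (s + 1), (n - 1).choose i := by
      calc Ts.card ≤ ∑ i ∈ Finset.range (s + 1), ((Finset.univ.erase e).powersetCard i).card :=
            Finset.card_biUnion_le
        _ = ∑ i ∈ Finset.range (s + 1), (n - 1).choose i := by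
            refine Finset.sum_congr rfl (fun i _ => ?_)
            rw [Finset.card_powersetCard]
            congr 1
            rw [Finset.card_erase_of_mem (Finset.mem_univ e), Finset.card_univ, Fintype.card_fin]
    omega
end

section
/- For integers s ≥ 1, q ≥ 2 and n ≥ 2s+1, the sum [n-1 choose s]_q + [n-1 choose s-1]_q + ... + [n-1 choose 0]_q is strictly less than [n choose s]_q. -/
/-!
Write `[m, k]` for `gaussBinom q m k`. The `q`-Pascal rule gives
`[n, s] = q ^ s [n-1, s] + [n-1, s-1]`. Since `2s ≤ n - 1`, the coefficients `[n-1, i]` increase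
for `i ≤ s`, so the `s - 1` terms `[n-1, i]` with `i < s - 1` add up to at most
`(s - 1) [n-1, s]`, and the whole sum is at most `s [n-1, s] + [n-1, s-1]`, which is less than
`[n, s]` because `s < 2 ^ s ≤ q ^ s`.
-/

/-- The Gaussian (q-)binomial coefficient. -/
def gaussBinom (q n k : ℕ) : ℚ :=
  ∏ i ∈ Finset.range k, ((q : ℚ) ^ (n - i) - 1) / ((q : ℚ) ^ (k - i) - 1)

open Finset

namespace gaussBinom

variable {q m n k : ℕ}

theorem eq_prod_div_prod (q m k : ℕ) :
    gaussBinom q m k =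
      (∏ i ∈ range k, ((q : ℚ) ^ (m - i) - 1)) / ∏ j ∈ range k, ((q : ℚ) ^ (j + 1) - 1) := by
  rw [gaussBinom, prod_div_distrib, ← prod_range_reflect (fun j ↦ (q : ℚ) ^ (j + 1) - 1) k]
  congr 1
  refine prod_congr rfl fun i hi ↦ ?_
  have := mem_range.mp hi
  congr 2
  omega

theorem succ_eq_mul (q m k : ℕ) :
    gaussBinom q m (k + 1) =
      gaussBinom q m k * (((q : ℚ) ^ (m - k) - 1) / ((q : ℚ) ^ (k + 1) - 1)) := by
  rw [eq_prod_div_prod, eq_prod_div_prod, prod_range_succ, prod_range_succ, div_mul_div_comm]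

theorem succ_succ_eq_mul (q n k : ℕ) :
    gaussBinom q (n + 1) (k + 1) =
      ((q : ℚ) ^ (n + 1) - 1) / ((q : ℚ) ^ (k + 1) - 1) * gaussBinom q n k := by
  rw [gaussBinom, prod_range_succ', gaussBinom, mul_comm]
  simp only [Nat.sub_zero, Nat.add_sub_add_right]

theorem one_lt_cast_pow (hq : 1 < q) (hk : k ≠ 0) : (1 : ℚ) < (q : ℚ) ^ k :=
  one_lt_pow₀ (by exact_mod_cast hq) hk

theorem pos (hq : 1 < q) (hkm : k ≤ m) : 0 < gaussBinom q m k :=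
  prod_pos fun i hi ↦ by
    have hik := mem_range.mp hi
    exact div_pos (sub_pos.mpr (one_lt_cast_pow hq (by omega)))
      (sub_pos.mpr (one_lt_cast_pow hq (by omega)))

theorem succ_succ (hq : 1 < q) (hkn : k ≤ n) :
    gaussBinom q (n + 1) (k + 1) =
      (q : ℚ) ^ (k + 1) * gaussBinom q n (k + 1) + gaussBinom q n k := by
  rw [succ_succ_eq_mul, succ_eq_mul]
  have hden : (q : ℚ) ^ (k + 1) - 1 ≠ 0 := (sub_pos.mpr (one_lt_cast_pow hq k.succ_ne_zero)).ne'
  have hpow : (q : ℚ) ^ (n - k) * (q : ℚ) ^ (k + 1) = (q : ℚ) ^ (n + 1) := by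
    rw [← pow_add]; congr 1; omega
  field_simp
  linear_combination (-gaussBinom q n k) * hpow

theorem le_succ (hq : 1 < q) (hkm : 2 * k + 1 ≤ m) : gaussBinom q m k ≤ gaussBinom q m (k + 1) := by
  rw [succ_eq_mul]
  refine le_mul_of_one_le_right (pos hq (by omega)).le ?_
  rw [one_le_div (by linarith [one_lt_cast_pow (k := k + 1) hq k.succ_ne_zero])]
  have : (q : ℚ) ^ (k + 1) ≤ (q : ℚ) ^ (m - k) :=
    pow_le_pow_right₀ (by exact_mod_cast hq.le) (by omega)
  linarith

theorem le_of_le_of_two_mul_le {i : ℕ} (hq : 1 < q) (hik : i ≤ k) (hkm : 2 * k ≤ m) :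
    gaussBinom q m i ≤ gaussBinom q m k := by
  induction k, hik using Nat.le_induction with
  | base => rfl
  | succ k _ ih => exact (ih (by omega)).trans (le_succ hq (by omega))

theorem sum_range_le {j : ℕ} (hq : 1 < q) (hjk : j ≤ k + 1) (hkm : 2 * k ≤ m) :
    ∑ i ∈ range j, gaussBinom q m i ≤ j * gaussBinom q m k := by
  simpa using sum_le_card_nsmul (range j) _ _ fun i hi ↦
    le_of_le_of_two_mul_le hq (by have := mem_range.mp hi; omega) hkm

end gaussBinom

theorem gaussBinom_sum_lt (q n s : ℕ) (hs : 1 ≤ s) (hq : 2 ≤ q) (hn : 2 * s + 1 ≤ n) :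
    ∑ i ∈ Finset.range (s + 1), gaussBinom q (n - 1) i < gaussBinom q n s := by
  obtain ⟨t, rfl⟩ : ∃ t, s = t + 1 := ⟨s - 1, by omega⟩
  obtain ⟨m, rfl⟩ : ∃ m, n = m + 1 := ⟨n - 1, by omega⟩
  rw [Nat.add_sub_cancel, sum_range_succ, sum_range_succ, gaussBinom.succ_succ hq (by omega)]
  have hsum := gaussBinom.sum_range_le (m := m) (j := t) (k := t + 1) hq (by omega) (by omega)
  have hpos : 0 < gaussBinom q m (t + 1) := gaussBinom.pos hq (by omega)
  have hcoef : (t : ℚ) + 1 < (q : ℚ) ^ (t + 1) := by exact_mod_cast Nat.lt_pow_self hq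
  linarith [mul_lt_mul_of_pos_right hcoef hpos]
end

section
/- Let n ≥ 2s+1 and 𝒱 be a Sperner family of subspaces of an n-dimensional vector space over F_q, each of dimension at most s. Then |𝒱| ≤ [n choose s]_q, with equality only if 𝒱 consists of all s-dimensional subspaces. -/
/-!
Write `L k` for the set of `k`-dimensional subspaces and `[m]_q = 1 + q + ⋯ + q^(m-1)`.
A `k`-space `U` lies in `[n-k]_q` spaces of dimension `k+1` (the lines of `V ⧸ U`), and a
`(k+1)`-space `W` contains `[k+1]_q` spaces of dimension `k` (dually, the hyperplanes of `W`).
Double counting these incidences gives `|L k| [n-k]_q = |L (k+1)| [k+1]_q`, whence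
`|L s| = [n choose s]_q`; applied to `𝒜 ⊆ L k` and its upper shadow `∇𝒜 ⊆ L (k+1)` it gives
`|𝒜| [n-k]_q ≤ |∇𝒜| [k+1]_q`, so `|𝒜| < |∇𝒜|` when `2k+2 ≤ n` and `𝒜 ≠ ∅`.
Replacing the lowest layer of a Sperner family by its upper shadow keeps it Sperner with
dimensions at most `s` and strictly increases it; repeating this until the family lies in `L s`
gives `|𝒱| ≤ |L s|`, with strict inequality as soon as some member has dimension below `s`.
-/

open Module Finset

theorem gaussBinom_eq_div (q n k : ℕ) :
    gaussBinom q n k =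
      (∏ i ∈ range k, ((q : ℚ) ^ (n - i) - 1)) / ∏ i ∈ range k, ((q : ℚ) ^ (i + 1) - 1) := by
  rw [gaussBinom, prod_div_distrib, ← prod_range_reflect (fun i => (q : ℚ) ^ (i + 1) - 1)]
  congr 1
  refine prod_congr rfl fun i hi => ?_
  rw [mem_range] at hi
  congr 2
  omega

theorem gaussBinom_succ (q n k : ℕ) :
    gaussBinom q n (k + 1) =
      gaussBinom q n k * (((q : ℚ) ^ (n - k) - 1) / ((q : ℚ) ^ (k + 1) - 1)) := by
  rw [gaussBinom_eq_div, gaussBinom_eq_div, prod_range_succ, prod_range_succ, mul_div_mul_comm]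

theorem geom_sum_range_lt_geom_sum_range {q a b : ℕ} (hq : 0 < q) (hab : a < b) :
    ∑ i ∈ range a, q ^ i < ∑ i ∈ range b, q ^ i :=
  sum_lt_sum_of_subset (range_subset_range.2 hab.le) (mem_range.2 hab) (by simp) (by positivity)
    fun _ _ _ => Nat.zero_le _

namespace Submodule

open scoped Classical

variable {K V : Type*} [Field K] [AddCommGroup V] [Module K V]

section

variable (K V) [Fintype (Submodule K V)]

noncomputable def finrankLayer (k : ℕ) : Finset (Submodule K V) := {W | finrank K W = k}

variable {K V}

@[simp] theorem mem_finrankLayer {k : ℕ} {W : Submodule K V} :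
    W ∈ finrankLayer K V k ↔ finrank K W = k := by
  simp [finrankLayer]

noncomputable def upShadow (𝒜 : Finset (Submodule K V)) : Finset (Submodule K V) :=
  {W | ∃ U ∈ 𝒜, U ≤ W ∧ finrank K W = finrank K U + 1}

@[simp] theorem mem_upShadow {𝒜 : Finset (Submodule K V)} {W : Submodule K V} :
    W ∈ upShadow 𝒜 ↔ ∃ U ∈ 𝒜, U ≤ W ∧ finrank K W = finrank K U + 1 := by
  simp [upShadow]

noncomputable def raiseLayer (𝒱 : Finset (Submodule K V)) (j : ℕ) : Finset (Submodule K V) :=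
  (𝒱 \ finrankLayer K V j) ∪ upShadow (𝒱 ∩ finrankLayer K V j)

theorem succ_le_finrank_of_mem_raiseLayer {𝒱 : Finset (Submodule K V)} {j : ℕ}
    (hj : ∀ U ∈ 𝒱, j ≤ finrank K U) {W : Submodule K V} (hW : W ∈ raiseLayer 𝒱 j) :
    j + 1 ≤ finrank K W := by
  simp only [raiseLayer, mem_union, mem_sdiff, mem_inter, mem_finrankLayer, mem_upShadow] at hW
  obtain ⟨hW, hWj⟩ | ⟨U, ⟨-, hU⟩, -, hWU⟩ := hW
  · have := hj W hW
    omega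
  · omega

theorem finrank_le_of_mem_raiseLayer {𝒱 : Finset (Submodule K V)} {j s : ℕ}
    (hs : ∀ U ∈ 𝒱, finrank K U ≤ s) (hjs : j < s) {W : Submodule K V}
    (hW : W ∈ raiseLayer 𝒱 j) : finrank K W ≤ s := by
  simp only [raiseLayer, mem_union, mem_sdiff, mem_inter, mem_finrankLayer, mem_upShadow] at hW
  obtain ⟨hW, -⟩ | ⟨U, ⟨-, hU⟩, -, hWU⟩ := hW
  · exact hs W hW
  · omega

theorem card_raiseLayer {𝒱 : Finset (Submodule K V)} {j : ℕ}
    (h𝒱 : IsAntichain (· ≤ ·) (𝒱 : Set (Submodule K V))) :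
    #(raiseLayer 𝒱 j) = #(𝒱 \ finrankLayer K V j) + #(upShadow (𝒱 ∩ finrankLayer K V j)) := by
  refine card_union_of_disjoint (disjoint_left.2 fun W hW hW' => ?_)
  obtain ⟨U, hU, hUW, hWU⟩ := mem_upShadow.1 hW'
  exact h𝒱 (mem_inter.1 hU).1 (mem_sdiff.1 hW).1 (by rintro rfl; omega) hUW

end

variable [FiniteDimensional K V]

theorem finrank_comap_mkQ (U : Submodule K V) (L : Submodule K (V ⧸ U)) :
    finrank K (L.comap U.mkQ) = finrank K L + finrank K U := by
  have h := LinearMap.finrank_range_add_finrank_ker (U.mkQ.domRestrict (L.comap U.mkQ))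
  rw [LinearMap.range_domRestrict, map_comap_eq_of_surjective U.mkQ_surjective,
    LinearMap.ker_domRestrict, ker_mkQ, (comapSubtypeEquivOfLe (le_comap_mkQ U L)).finrank_eq] at h
  exact h.symm

section

variable [Fintype (Submodule K V)]

theorem card_finrankLayer_zero : #(finrankLayer K V 0) = 1 := by
  rw [card_eq_one]
  exact ⟨⊥, by ext; simp⟩

theorem isAntichain_raiseLayer {𝒱 : Finset (Submodule K V)} {j : ℕ}
    (h𝒱 : IsAntichain (· ≤ ·) (𝒱 : Set (Submodule K V))) (hj : ∀ U ∈ 𝒱, j ≤ finrank K U) :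
    IsAntichain (· ≤ ·) (raiseLayer 𝒱 j : Set (Submodule K V)) := by
  intro X hX Y hY hXY hle
  rcases mem_union.1 hY with hY' | hY'
  · rw [mem_sdiff, mem_finrankLayer] at hY'
    rcases mem_union.1 hX with hX' | hX'
    · exact h𝒱 (mem_sdiff.1 hX').1 hY'.1 hXY hle
    · obtain ⟨U, hU, hUX, -⟩ := mem_upShadow.1 hX'
      rw [mem_inter, mem_finrankLayer] at hU
      exact h𝒱 hU.1 hY'.1 (by rintro rfl; exact hY'.2 hU.2) (hUX.trans hle)
  · obtain ⟨U, hU, -, hYU⟩ := mem_upShadow.1 hY'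
    rw [mem_inter, mem_finrankLayer] at hU
    have := succ_le_finrank_of_mem_raiseLayer hj hX
    exact hXY (eq_of_le_of_finrank_le hle (by omega))

end

variable [Finite K]

theorem natCard_finrank_eq_one (M : Type*) [AddCommGroup M] [Module K M] [FiniteDimensional K M] :
    Nat.card {L : Submodule K M // finrank K L = 1} =
      ∑ i ∈ range (finrank K M), Nat.card K ^ i := by
  rw [← Nat.card_congr (Projectivization.equivSubmodule K M),
    Projectivization.card_of_finrank K M rfl]

theorem natCard_covers (U : Submodule K V) :
    Nat.card {W : Submodule K V // U ≤ W ∧ finrank K W = finrank K U + 1} =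
      ∑ i ∈ range (finrank K V - finrank K U), Nat.card K ^ i := by
  rw [← finrank_quotient U, ← natCard_finrank_eq_one]
  refine (Nat.card_congr ?_).symm
  refine ((comapMkQRelIso U).toEquiv.subtypeEquiv fun L => ?_).trans
    (Equiv.subtypeSubtypeEquivSubtypeInter _ _)
  change _ ↔ finrank K (L.comap U.mkQ) = _
  rw [finrank_comap_mkQ]
  omega

theorem natCard_cocovers (W : Submodule K V) :
    Nat.card {U : Submodule K V // U ≤ W ∧ finrank K U + 1 = finrank K W} =
      ∑ i ∈ range (finrank K W), Nat.card K ^ i := by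
  have hW := Subspace.finrank_add_finrank_dualAnnihilator_eq W
  have hd := Subspace.dual_finrank_eq (K := K) (V := V)
  conv_rhs => rw [show finrank K W = finrank K (Dual K V) - finrank K W.dualAnnihilator by omega,
    ← natCard_covers]
  let e : Submodule K V ≃ Submodule K (Dual K V) :=
    ⟨dualAnnihilator, dualCoannihilator, fun _ => Subspace.dualAnnihilator_dualCoannihilator_eq,
      fun _ => Subspace.dualCoannihilator_dualAnnihilator_eq⟩
  refine Nat.card_congr (e.subtypeEquiv fun U => ?_)
  have hU := Subspace.finrank_add_finrank_dualAnnihilator_eq U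
  change _ ↔ W.dualAnnihilator ≤ U.dualAnnihilator ∧
    finrank K U.dualAnnihilator = finrank K W.dualAnnihilator + 1
  rw [Subspace.dualAnnihilator_le_dualAnnihilator_iff]
  exact and_congr_right fun _ => by omega

instance : Finite (Submodule K V) :=
  have := Module.finite_of_finite K (M := V)
  .of_injective _ SetLike.coe_injective

section

variable [Fintype (Submodule K V)]

theorem card_bipartiteAbove_finrankLayer (U : Submodule K V) :
    #((finrankLayer K V (finrank K U + 1)).bipartiteAbove (· ≤ ·) U) =
      ∑ i ∈ range (finrank K V - finrank K U), Nat.card K ^ i := by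
  rw [← natCard_covers, Nat.card_eq_fintype_card, Fintype.card_subtype]
  congr 1
  ext W
  simp [bipartiteAbove, and_comm]

theorem card_bipartiteBelow_finrankLayer {k : ℕ} {W : Submodule K V} (hW : finrank K W = k + 1) :
    #((finrankLayer K V k).bipartiteBelow (· ≤ ·) W) = ∑ i ∈ range (k + 1), Nat.card K ^ i := by
  rw [← hW, ← natCard_cocovers, Nat.card_eq_fintype_card, Fintype.card_subtype]
  congr 1
  ext U
  simp [bipartiteBelow, hW, and_comm]

theorem card_finrankLayer_mul (k : ℕ) :
    #(finrankLayer K V k) * ∑ i ∈ range (finrank K V - k), Nat.card K ^ i =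
      #(finrankLayer K V (k + 1)) * ∑ i ∈ range (k + 1), Nat.card K ^ i :=
  card_mul_eq_card_mul (· ≤ ·)
    (fun U hU => by rw [← mem_finrankLayer.1 hU, card_bipartiteAbove_finrankLayer])
    (fun W hW => card_bipartiteBelow_finrankLayer (mem_finrankLayer.1 hW))

theorem card_finrankLayer (k : ℕ) :
    (#(finrankLayer K V k) : ℚ) = gaussBinom (Nat.card K) (finrank K V) k := by
  induction k with
  | zero => simp [gaussBinom, card_finrankLayer_zero]
  | succ k ih =>
    have hq : (1 : ℚ) < Nat.card K := mod_cast Finite.one_lt_card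
    have hpos : (0 : ℚ) < (Nat.card K : ℚ) ^ (k + 1) - 1 :=
      sub_pos.2 (one_lt_pow₀ hq k.succ_ne_zero)
    have h := congrArg (fun x : ℕ => (x : ℚ) * (Nat.card K - 1))
      (card_finrankLayer_mul (K := K) (V := V) k)
    simp only [Nat.cast_mul, Nat.cast_sum, Nat.cast_pow, mul_assoc, geom_sum_mul] at h
    rw [gaussBinom_succ, ← ih, mul_div_assoc', eq_div_iff hpos.ne']
    exact h.symm

theorem card_lt_card_upShadow {𝒜 : Finset (Submodule K V)} {k : ℕ} (hk : 2 * k + 2 ≤ finrank K V)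
    (h𝒜 : ∀ U ∈ 𝒜, finrank K U = k) (hne : 𝒜.Nonempty) : #𝒜 < #(upShadow 𝒜) := by
  have key : #𝒜 * ∑ i ∈ range (k + 1), Nat.card K ^ i <
      #(upShadow 𝒜) * ∑ i ∈ range (k + 1), Nat.card K ^ i := by
    refine card_nsmul_lt_card_nsmul_of_lt_of_le (· ≤ ·) hne (fun U hU => ?_) (fun W hW => ?_)
    · calc ∑ i ∈ range (k + 1), Nat.card K ^ i
          < ∑ i ∈ range (finrank K V - finrank K U), Nat.card K ^ i :=
            geom_sum_range_lt_geom_sum_range Nat.card_pos (by rw [h𝒜 U hU]; omega)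
        _ = #((finrankLayer K V (finrank K U + 1)).bipartiteAbove (· ≤ ·) U) :=
            (card_bipartiteAbove_finrankLayer U).symm
        _ ≤ #((upShadow 𝒜).bipartiteAbove (· ≤ ·) U) := card_le_card fun W hW => by
            simp only [mem_bipartiteAbove, mem_finrankLayer] at hW
            simpa [mem_bipartiteAbove] using ⟨⟨U, hU, hW.2, hW.1⟩, hW.2⟩
    · obtain ⟨U, hU, -, hW⟩ := mem_upShadow.1 hW
      rw [h𝒜 U hU] at hW
      calc #(𝒜.bipartiteBelow (· ≤ ·) W)
          ≤ #((finrankLayer K V k).bipartiteBelow (· ≤ ·) W) := card_le_card fun X hX => by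
            simp only [mem_bipartiteBelow, mem_finrankLayer] at hX ⊢
            exact ⟨h𝒜 X hX.1, hX.2⟩
        _ = _ := card_bipartiteBelow_finrankLayer hW
  exact Nat.lt_of_mul_lt_mul_right key

theorem card_le_card_upShadow {𝒜 : Finset (Submodule K V)} {k : ℕ} (hk : 2 * k + 2 ≤ finrank K V)
    (h𝒜 : ∀ U ∈ 𝒜, finrank K U = k) : #𝒜 ≤ #(upShadow 𝒜) := by
  obtain rfl | hne := 𝒜.eq_empty_or_nonempty
  · simp
  · exact (card_lt_card_upShadow hk h𝒜 hne).le

theorem card_le_card_raiseLayer {𝒱 : Finset (Submodule K V)} {j : ℕ}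
    (h𝒱 : IsAntichain (· ≤ ·) (𝒱 : Set (Submodule K V))) (hj : 2 * j + 2 ≤ finrank K V) :
    #𝒱 ≤ #(raiseLayer 𝒱 j) := by
  rw [card_raiseLayer h𝒱, ← card_sdiff_add_card_inter 𝒱 (finrankLayer K V j)]
  exact Nat.add_le_add_left
    (card_le_card_upShadow hj fun U hU => mem_finrankLayer.1 (mem_inter.1 hU).2) _

theorem card_lt_card_raiseLayer {𝒱 : Finset (Submodule K V)} {j : ℕ}
    (h𝒱 : IsAntichain (· ≤ ·) (𝒱 : Set (Submodule K V))) (hj : 2 * j + 2 ≤ finrank K V)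
    {U : Submodule K V} (hU : U ∈ 𝒱) (hUj : finrank K U = j) : #𝒱 < #(raiseLayer 𝒱 j) := by
  rw [card_raiseLayer h𝒱, ← card_sdiff_add_card_inter 𝒱 (finrankLayer K V j)]
  exact Nat.add_lt_add_left (card_lt_card_upShadow hj
    (fun W hW => mem_finrankLayer.1 (mem_inter.1 hW).2)
    ⟨U, mem_inter.2 ⟨hU, mem_finrankLayer.2 hUj⟩⟩) _

theorem card_le_card_finrankLayer_of_le_finrank {s : ℕ} (hn : 2 * s + 1 ≤ finrank K V)
    {𝒱 : Finset (Submodule K V)} (h𝒱 : IsAntichain (· ≤ ·) (𝒱 : Set (Submodule K V)))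
    (hs : ∀ U ∈ 𝒱, finrank K U ≤ s) (j : ℕ) (hj : ∀ U ∈ 𝒱, j ≤ finrank K U) :
    #𝒱 ≤ #(finrankLayer K V s) := by
  by_cases hjs : s ≤ j
  · exact card_le_card fun U hU => mem_finrankLayer.2 ((hs U hU).antisymm (hjs.trans (hj U hU)))
  · calc #𝒱 ≤ #(raiseLayer 𝒱 j) := card_le_card_raiseLayer h𝒱 (by omega)
      _ ≤ _ := card_le_card_finrankLayer_of_le_finrank hn (isAntichain_raiseLayer h𝒱 hj)
          (fun _ hU => finrank_le_of_mem_raiseLayer hs (by omega) hU) (j + 1)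
          (fun _ hU => succ_le_finrank_of_mem_raiseLayer hj hU)
termination_by s - j

theorem card_lt_card_finrankLayer {s : ℕ} (hn : 2 * s + 1 ≤ finrank K V)
    {𝒱 : Finset (Submodule K V)} (h𝒱 : IsAntichain (· ≤ ·) (𝒱 : Set (Submodule K V)))
    (hs : ∀ U ∈ 𝒱, finrank K U ≤ s) {U : Submodule K V} (hU : U ∈ 𝒱) (hUs : finrank K U < s) :
    #𝒱 < #(finrankLayer K V s) := by
  obtain ⟨U₀, hU₀, hmin⟩ := 𝒱.exists_min_image (finrank K ·) ⟨U, hU⟩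
  have hjs : finrank K U₀ < s := (hmin U hU).trans_lt hUs
  calc #𝒱 < #(raiseLayer 𝒱 (finrank K U₀)) := card_lt_card_raiseLayer h𝒱 (by omega) hU₀ rfl
    _ ≤ _ := card_le_card_finrankLayer_of_le_finrank hn (isAntichain_raiseLayer h𝒱 hmin)
        (fun _ hW => finrank_le_of_mem_raiseLayer hs hjs hW) _
        (fun _ hW => succ_le_finrank_of_mem_raiseLayer hmin hW)

end

end Submodule

open Submodule in
theorem sperner_small_dim (q n s : ℕ) (hn : 2 * s + 1 ≤ n)
    (K : Type*) [Field K] [Fintype K] (hq : Fintype.card K = q)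
    (V : Type*) [AddCommGroup V] [Module K V] [FiniteDimensional K V]
    (hdim : Module.finrank K V = n)
    (𝒱 : Finset (Submodule K V))
    (hSperner : ∀ U ∈ 𝒱, ∀ W ∈ 𝒱, U ≠ W → ¬ U ≤ W)
    (hsmall : ∀ U ∈ 𝒱, Module.finrank K U ≤ s) :
    (𝒱.card : ℚ) ≤ gaussBinom q n s ∧
      ((𝒱.card : ℚ) = gaussBinom q n s →
        ∀ U : Submodule K V, U ∈ 𝒱 ↔ Module.finrank K U = s) := by
  subst hq hdim
  have : Fintype (Submodule K V) := .ofFinite _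
  rw [← Nat.card_eq_fintype_card, ← card_finrankLayer]
  refine ⟨mod_cast card_le_card_finrankLayer_of_le_finrank hn hSperner hsmall 0
    (fun _ _ => Nat.zero_le _), fun heq => ?_⟩
  have hall : ∀ U ∈ 𝒱, finrank K U = s := fun U hU =>
    (hsmall U hU).eq_or_lt.resolve_right fun hlt =>
      (card_lt_card_finrankLayer hn hSperner hsmall hU hlt).ne (mod_cast heq)
  have h𝒱 : 𝒱 = finrankLayer K V s :=
    eq_of_subset_of_card_le (fun U hU => mem_finrankLayer.2 (hall U hU)) (mod_cast heq.ge)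
  intro U
  rw [h𝒱, mem_finrankLayer]
end
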